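/- arXiv:1605.08322 — 3 statements merged into one kernel-verified Lean document; each statement's English description precedes it below -/
import Mathlib

section
/- Let μ̂ be a mixing ergodic σ-invariant local weak Gibbs measure with potential φ ∈ L¹(μ̂) and summable variations on a topological Markov chain. Fix 0-cylinders P₁, P₂ and ε > 0. Let Good(M,ε) be the set of z with e^{−(j+1)(P−∫φdμ̂+ε)} < μ̂(C(j,z)) < e^{−(j+1)(P−∫φdμ̂−ε)} for all j ≥ M, and let S_N(M,ε) be the union of the N-cylinders C(N,z) ⊆ P₁ with z ∈ Good(M,ε) and σ^N(C(N,z)) = P₂. Then for all M large enough (depending on P₁ and ε) and all N large enough (depending on P₁, P₂), μ̂(S_N(M,ε)) ≥ (1/2) μ̂(P₁) μ̂(P₂). -/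
/-!
For a.e. `z`, Birkhoff's ergodic theorem and the weak Gibbs bounds (with `log K n = o(n)`) give
`log μ̂(C(j,z)) / (j+1) → ∫φ - P`, so the measurable sets `Good(M,ε)` increase to a set of full
measure. Every point of `Good(M,ε) ∩ P₁ ∩ σ^{-N} P₂` lies in one of the cylinders making up
`S_N(M,ε)`, hence `μ̂(S_N(M,ε)) ≥ μ̂(P₁ ∩ σ^{-N} P₂) - μ̂(Good(M,ε)ᶜ)`; by mixing the first term
tends to `μ̂(P₁) μ̂(P₂)` and the second is small once `M` is large.

Birkhoff's theorem comes from the maximal ergodic theorem: if `∫ h < 0`, the invariant set where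
the sums `S_n h` are bounded above cannot be null, since on its complement some `S_n h` is
positive. The measurable structure on the alphabet is arbitrary, so cylinders need not be
measurable; they are compared with the cylinders over measurable atoms, which are measurable
and have the same (outer) measure.
-/

open MeasureTheory Filter Finset ENNReal

def lshift {I : Type*} : (ℕ → I) → (ℕ → I) := fun x n => x (n + 1)

def cyl {I : Type*} (n : ℕ) (z : ℕ → I) : Set (ℕ → I) := {x | ∀ s ≤ n, x s = z s}

/-- The set of `(M,ε)`-good points: those whose cylinder measures obey the
Shannon–McMillan–Breiman bounds with error `ε` from level `M` on. -/
def goodSet {I : Type*} [MeasurableSpace I] (μ : Measure (ℕ → I))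
    (P : ℝ) (intφ : ℝ) (M : ℕ) (ε : ℝ) : Set (ℕ → I) :=
  {z | ∀ j : ℕ, M ≤ j →
    Real.exp (-((j : ℝ) + 1) * (P - intφ + ε)) < (μ (cyl j z)).toReal ∧
    (μ (cyl j z)).toReal < Real.exp (-((j : ℝ) + 1) * (P - intφ - ε))}

open Topology

section MaximalErgodic

variable {α : Type*} {T : α → α} {g : α → ℝ}

def maxBirkhoffSum (T : α → α) (g : α → ℝ) (N : ℕ) : α → ℝ :=
  (range (N + 1)).sup' nonempty_range_add_one fun n => birkhoffSum T g (n + 1)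

lemma maxBirkhoffSum_apply (N : ℕ) (x : α) :
    maxBirkhoffSum T g N x =
      (range (N + 1)).sup' nonempty_range_add_one fun n => birkhoffSum T g (n + 1) x :=
  Finset.sup'_apply _ _ _

lemma maxBirkhoffSum_le_add (N : ℕ) (x : α) :
    maxBirkhoffSum T g N x ≤ g x + max (maxBirkhoffSum T g N (T x)) 0 := by
  rw [maxBirkhoffSum_apply]
  refine Finset.sup'_le _ _ fun n hn => ?_
  rw [birkhoffSum_succ']
  gcongr
  rcases n with _ | m
  · simp
  · refine le_max_of_le_left ?_
    rw [maxBirkhoffSum_apply]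
    exact Finset.le_sup' (fun n => birkhoffSum T g (n + 1) (T x))
      (mem_range.2 (by have := mem_range.1 hn; omega))

lemma maxBirkhoffSum_pos_iff (N : ℕ) (x : α) :
    0 < maxBirkhoffSum T g N x ↔ ∃ n ≤ N, 0 < birkhoffSum T g (n + 1) x := by
  simp [maxBirkhoffSum_apply, Finset.lt_sup'_iff]

lemma monotone_maxBirkhoffSum (x : α) : Monotone fun N => maxBirkhoffSum T g N x := by
  intro N N' h
  simp only [maxBirkhoffSum_apply]
  exact Finset.sup'_mono _ (range_subset_range.2 (by omega)) _

variable [MeasurableSpace α] {μ : Measure α}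

lemma integrable_birkhoffSum (hT : MeasurePreserving T μ μ) (hg : Integrable g μ) (n : ℕ) :
    Integrable (birkhoffSum T g n) μ :=
  integrable_finsetSum _ fun k _ =>
    ((hT.iterate k).integrable_comp hg.aestronglyMeasurable).mpr hg

lemma integrable_maxBirkhoffSum (hT : MeasurePreserving T μ μ) (hg : Integrable g μ) (N : ℕ) :
    Integrable (maxBirkhoffSum T g N) μ :=
  Finset.sup'_induction (p := (Integrable · μ)) _ _ (fun _ h₁ _ h₂ => h₁.sup h₂)
    fun n _ => integrable_birkhoffSum hT hg (n + 1)

lemma setIntegral_maxBirkhoffSum_pos_nonneg (hT : MeasurePreserving T μ μ) (hg : Integrable g μ)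
    (N : ℕ) : 0 ≤ ∫ x in {x | 0 < maxBirkhoffSum T g N x}, g x ∂μ := by
  set B := {x | 0 < maxBirkhoffSum T g N x}
  set F : α → ℝ := fun x => max (maxBirkhoffSum T g N x) 0
  have hF : Integrable F μ := (integrable_maxBirkhoffSum hT hg N).pos_part
  have hFT : Integrable (fun x => F (T x)) μ :=
    (hT.integrable_comp hF.aestronglyMeasurable).mpr hF
  have hB : NullMeasurableSet B μ := nullMeasurableSet_lt (aemeasurable_const (b := 0))
    (integrable_maxBirkhoffSum hT hg N).aemeasurable
  have hF_comp : ∫ x, F (T x) ∂μ = ∫ x, F x ∂μ := by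
    rw [← integral_map hT.aemeasurable (by rw [hT.map_eq]; exact hF.aestronglyMeasurable),
      hT.map_eq]
  have hpt : ∀ x, F x - F (T x) ≤ B.indicator g x := by
    intro x
    by_cases hx : x ∈ B
    · rw [Set.indicator_of_mem hx]
      have : F x = maxBirkhoffSum T g N x := max_eq_left hx.le
      linarith [maxBirkhoffSum_le_add (T := T) (g := g) N x]
    · rw [Set.indicator_of_notMem hx]
      have : F x = 0 := max_eq_right (not_lt.1 hx)
      linarith [le_max_right (maxBirkhoffSum T g N (T x)) 0]
  calc 0 = ∫ x, (F x - F (T x)) ∂μ := by rw [integral_sub hF hFT, hF_comp, sub_self]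
    _ ≤ ∫ x, B.indicator g x ∂μ := integral_mono (hF.sub hFT) (hg.indicator₀ hB) hpt
    _ = ∫ x in B, g x ∂μ := integral_indicator₀ hB

theorem setIntegral_exists_birkhoffSum_pos_nonneg (hT : MeasurePreserving T μ μ)
    (hg : Integrable g μ) :
    0 ≤ ∫ x in {x | ∃ n, 0 < n ∧ 0 < birkhoffSum T g n x}, g x ∂μ := by
  have hU : (⋃ N, {x | 0 < maxBirkhoffSum T g N x}) =
      {x | ∃ n, 0 < n ∧ 0 < birkhoffSum T g n x} := by
    ext x
    simp only [Set.mem_iUnion, Set.mem_ofPred_eq, maxBirkhoffSum_pos_iff]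
    constructor
    · rintro ⟨N, n, -, hn⟩
      exact ⟨n + 1, n.succ_pos, hn⟩
    · rintro ⟨_ | n, hn, hpos⟩
      · exact absurd hn (lt_irrefl 0)
      · exact ⟨n, n, le_rfl, hpos⟩
  have hlim := tendsto_setIntegral_of_monotone₀ (μ := μ) (f := g)
    (s := fun N => {x | 0 < maxBirkhoffSum T g N x})
    (fun N => nullMeasurableSet_lt (aemeasurable_const (b := 0))
      (integrable_maxBirkhoffSum hT hg N).aemeasurable)
    (fun N N' h x hx => lt_of_lt_of_le hx (monotone_maxBirkhoffSum x h)) hg.integrableOn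
  rw [hU] at hlim
  exact ge_of_tendsto' hlim fun N => setIntegral_maxBirkhoffSum_pos_nonneg hT hg N

end MaximalErgodic

section Birkhoff

variable {α : Type*} {T : α → α} {g : α → ℝ}

lemma birkhoffSum_sub_const (c : ℝ) (n : ℕ) (x : α) :
    birkhoffSum T (g - fun _ => c) n x = birkhoffSum T g n x - n * c := by
  simp [birkhoffSum]

lemma bddAbove_birkhoffSum_apply_iff (x : α) :
    BddAbove (Set.range fun n => birkhoffSum T g n (T x)) ↔
      BddAbove (Set.range fun n => birkhoffSum T g n x) := by
  simp only [bddAbove_def, Set.forall_mem_range]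
  constructor
  · rintro ⟨C, hC⟩
    refine ⟨max 0 (g x + C), fun n => ?_⟩
    rcases n with _ | n
    · simp
    · rw [birkhoffSum_succ']
      exact le_max_of_le_right (by linarith [hC n])
  · rintro ⟨C, hC⟩
    refine ⟨C - g x, fun n => ?_⟩
    have := hC (n + 1)
    rw [birkhoffSum_succ'] at this
    linarith

variable [MeasurableSpace α] {μ : Measure α}

lemma nullMeasurableSet_bddAbove_birkhoffSum (hT : MeasurePreserving T μ μ)
    (hg : Integrable g μ) :
    NullMeasurableSet {x | BddAbove (Set.range fun n => birkhoffSum T g n x)} μ := by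
  have : {x | BddAbove (Set.range fun n => birkhoffSum T g n x)} =
      ⋃ m : ℕ, ⋂ n : ℕ, {x | birkhoffSum T g n x ≤ m} := by
    ext x
    simp only [bddAbove_def, Set.forall_mem_range, Set.mem_iUnion, Set.mem_iInter,
      Set.mem_ofPred_eq]
    refine ⟨fun ⟨C, hC⟩ => ?_, fun ⟨m, hm⟩ => ⟨m, hm⟩⟩
    obtain ⟨m, hm⟩ := exists_nat_ge C
    exact ⟨m, fun n => (hC n).trans hm⟩
  rw [this]
  exact .iUnion fun m => .iInter fun n =>
    nullMeasurableSet_le (integrable_birkhoffSum hT hg n).aemeasurable aemeasurable_const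

theorem ae_bddAbove_birkhoffSum (hE : Ergodic T μ) (hg : Integrable g μ)
    (hneg : ∫ x, g x ∂μ < 0) :
    ∀ᵐ x ∂μ, BddAbove (Set.range fun n => birkhoffSum T g n x) := by
  set B := {x | BddAbove (Set.range fun n => birkhoffSum T g n x)}
  have hinv : T ⁻¹' B = B := Set.ext fun x => bddAbove_birkhoffSum_apply_iff x
  rcases hE.quasiErgodic.ae_empty_or_univ₀
    (nullMeasurableSet_bddAbove_birkhoffSum hE.toMeasurePreserving hg) hinv.eventuallyEq
    with hB | hB
  · exfalso
    have hsub : Bᶜ ⊆ {x | ∃ n, 0 < n ∧ 0 < birkhoffSum T g n x} := by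
      intro x hx
      obtain ⟨n, hn⟩ := (by simpa [B, bddAbove_def] using hx :
        ∀ C : ℝ, ∃ n, C < birkhoffSum T g n x) 0
      exact ⟨n, Nat.pos_of_ne_zero (by rintro rfl; simp at hn), hn⟩
    have hfull : {x | ∃ n, 0 < n ∧ 0 < birkhoffSum T g n x} =ᵐ[μ] Set.univ :=
      ae_eq_univ.2 (measure_mono_null (Set.compl_subset_comm.1 hsub) (ae_eq_empty.1 hB))
    have := setIntegral_exists_birkhoffSum_pos_nonneg hE.toMeasurePreserving hg
    rw [setIntegral_congr_set hfull, setIntegral_univ] at this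
    linarith
  · exact ae_iff.2 (ae_eq_univ.1 hB)

variable [IsProbabilityMeasure μ]

theorem ae_eventually_birkhoffSum_lt (hE : Ergodic T μ) (hg : Integrable g μ) {c : ℝ}
    (hc : ∫ x, g x ∂μ < c) : ∀ᵐ x ∂μ, ∀ᶠ n : ℕ in atTop, birkhoffSum T g n x < n * c := by
  obtain ⟨c', hgc', hc'c⟩ := exists_between hc
  have hneg : ∫ x, (g - fun _ : α => c') x ∂μ < 0 := by
    simp only [Pi.sub_apply, integral_sub hg (integrable_const c'), integral_const,
      probReal_univ, one_smul]
    linarith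
  filter_upwards [ae_bddAbove_birkhoffSum hE (hg.sub (integrable_const c')) hneg]
    with x ⟨C, hC⟩
  have hCx : ∀ n : ℕ, birkhoffSum T g n x ≤ C + n * c' := fun n => by
    linarith [birkhoffSum_sub_const (T := T) (g := g) c' n x, hC ⟨n, rfl⟩]
  have hgap : 0 < c - c' := sub_pos.2 hc'c
  filter_upwards [(tendsto_natCast_atTop_atTop.atTop_mul_const hgap).eventually_gt_atTop C]
    with n hn
  linarith [hCx n]

theorem ae_eventually_lt_birkhoffSum (hE : Ergodic T μ) (hg : Integrable g μ) {c : ℝ}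
    (hc : c < ∫ x, g x ∂μ) : ∀ᵐ x ∂μ, ∀ᶠ n : ℕ in atTop, n * c < birkhoffSum T g n x := by
  have hneg : ∫ x, (-g) x ∂μ < -c := by simpa [integral_neg] using hc
  filter_upwards [ae_eventually_birkhoffSum_lt hE hg.neg hneg] with x hx
  filter_upwards [hx] with n hn
  rw [birkhoffSum_neg] at hn
  linarith

theorem ae_tendsto_birkhoffSum_div (hE : Ergodic T μ) (hg : Integrable g μ) :
    ∀ᵐ x ∂μ, Tendsto (fun n : ℕ => birkhoffSum T g n x / n) atTop (𝓝 (∫ y, g y ∂μ)) := by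
  have hup : ∀ᵐ x ∂μ, ∀ q : ℚ, ∫ y, g y ∂μ < q →
      ∀ᶠ n : ℕ in atTop, birkhoffSum T g n x < n * q :=
    ae_all_iff.2 fun q => eventually_imp_distrib_left.2 (ae_eventually_birkhoffSum_lt hE hg)
  have hlo : ∀ᵐ x ∂μ, ∀ q : ℚ, (q : ℝ) < ∫ y, g y ∂μ →
      ∀ᶠ n : ℕ in atTop, n * (q : ℝ) < birkhoffSum T g n x :=
    ae_all_iff.2 fun q => eventually_imp_distrib_left.2 (ae_eventually_lt_birkhoffSum hE hg)
  filter_upwards [hup, hlo] with x hup hlo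
  refine tendsto_order.2 ⟨fun b hb => ?_, fun b hb => ?_⟩
  · obtain ⟨q, hbq, hq⟩ := exists_rat_btwn hb
    filter_upwards [hlo q hq, eventually_gt_atTop 0] with n hn hn0
    exact hbq.trans ((lt_div_iff₀ (by exact_mod_cast hn0)).2 (by linarith))
  · obtain ⟨q, hq, hqb⟩ := exists_rat_btwn hb
    filter_upwards [hup q hq, eventually_gt_atTop 0] with n hn hn0
    exact ((div_lt_iff₀ (by exact_mod_cast hn0)).2 (by linarith)).trans hqb

end Birkhoff

section MeasurableAtom

lemma mem_measurableAtom_pi_iff {ι : Type*} {β : ι → Type*} [∀ i, MeasurableSpace (β i)]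
    {x y : ∀ i, β i} : y ∈ measurableAtom x ↔ ∀ i, y i ∈ measurableAtom (x i) := by
  refine ⟨fun h i => ?_, fun h => ?_⟩
  · simp only [measurableAtom, Set.mem_iInter]
    exact fun S hxS hS => mem_of_mem_measurableAtom h (measurable_pi_apply i hS) hxS
  have hsymm : ∀ i, x i ∈ measurableAtom (y i) := fun i =>
    measurableAtom_eq_of_mem (h i) ▸ mem_measurableAtom_self (x i)
  -- the sets that do not separate `x` from `y` form a σ-algebra
  let m : MeasurableSpace (∀ i, β i) :=
    { MeasurableSet' := fun E => x ∈ E ↔ y ∈ E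
      measurableSet_empty := Iff.rfl
      measurableSet_compl := fun _ hE => not_congr hE
      measurableSet_iUnion := fun _ hE => by
        simp only [Set.mem_iUnion]
        exact exists_congr hE }
  have hle : MeasurableSpace.pi ≤ m := iSup_le fun i => by
    rintro _ ⟨S, hS, rfl⟩
    exact ⟨fun hx => mem_of_mem_measurableAtom (h i) hS hx,
      fun hy => mem_of_mem_measurableAtom (hsymm i) hS hy⟩
  simp only [measurableAtom, Set.mem_iInter]
  exact fun E hxE hE => (hle E hE).1 hxE

variable {α : Type*} [MeasurableSpace α]

lemma measure_le_of_forall_mem_measurableAtom (μ : Measure α) {A B : Set α}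
    (h : ∀ y ∈ B, ∃ x ∈ A, y ∈ measurableAtom x) : μ B ≤ μ A :=
  calc μ B ≤ μ (toMeasurable μ A) := measure_mono fun y hy => by
        obtain ⟨x, hx, hyx⟩ := h y hy
        exact mem_of_mem_measurableAtom hyx (measurableSet_toMeasurable μ A)
          (subset_toMeasurable μ A hx)
    _ = μ A := measure_toMeasurable A

lemma measurable_of_forall_mem_measurableAtom {γ : Type*} [MeasurableSpace γ] [Countable α]
    {f : α → γ} (hf : ∀ x, ∀ y ∈ measurableAtom x, f y = f x) : Measurable f := by
  intro U _
  have : f ⁻¹' U = ⋃ x ∈ f ⁻¹' U, measurableAtom x := by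
    ext y
    simp only [Set.mem_iUnion]
    exact ⟨fun hy => ⟨y, hy, mem_measurableAtom_self y⟩,
      fun ⟨x, hx, hyx⟩ => show f y ∈ U from hf x y hyx ▸ hx⟩
  rw [this]
  exact .biUnion (Set.to_countable _) fun x _ => .measurableAtom_of_countable x

lemma measure_pi_singleton_eq_measure_pi_measurableAtom {ι : Type*} {β : ι → Type*}
    [∀ i, MeasurableSpace (β i)] (μ : Measure (∀ i, β i)) (s : Set ι) (x : ∀ i, β i) :
    μ (s.pi fun i => {x i}) = μ (s.pi fun i => measurableAtom (x i)) := by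
  classical
  refine le_antisymm
    (measure_mono (Set.pi_mono fun i _ => Set.singleton_subset_iff.2 (mem_measurableAtom_self _)))
    (measure_le_of_forall_mem_measurableAtom μ fun y hy => ⟨s.piecewise x y, fun i hi => ?_, ?_⟩)
  · simp [Set.piecewise_eq_of_mem _ _ _ hi]
  · refine mem_measurableAtom_pi_iff.2 fun i => ?_
    by_cases hi : i ∈ s
    · rw [Set.piecewise_eq_of_mem _ _ _ hi]
      exact hy i hi
    · rw [Set.piecewise_eq_of_notMem _ _ _ hi]
      exact mem_measurableAtom_self _

end MeasurableAtom

lemma eventually_eventually_lt_of_le_add {ι κ β : Type*} [AddCommMonoid β] [LinearOrder β]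
    [IsOrderedAddMonoid β] [TopologicalSpace β] [OrderTopology β] [ContinuousAdd β]
    {l : Filter ι} {l' : Filter κ} {p c : β} {b : κ → β} {e : ι → β} {s : ι → κ → β}
    (hb : Tendsto b l' (𝓝 p)) (he : Tendsto e l (𝓝 0)) (hs : ∀ M N, b N ≤ s M N + e M)
    (hc : c < p) : ∀ᶠ M in l, ∀ᶠ N in l', c < s M N := by
  have hce : Tendsto (fun M => c + e M) l (𝓝 c) := by simpa using tendsto_const_nhds.add he
  filter_upwards [hce.eventually (eventually_lt_nhds hc)] with M hM
  filter_upwards [hb.eventually (eventually_gt_nhds hM)] with N hN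
  exact lt_of_add_lt_add_right (hN.trans_le (hs M N))

lemma tendsto_measure_compl_of_ae_exists_mem {α : Type*} [MeasurableSpace α] {μ : Measure α}
    [IsFiniteMeasure μ] {G : ℕ → Set α} (hmeas : ∀ M, MeasurableSet (G M)) (hmono : Monotone G)
    (hae : ∀ᵐ x ∂μ, ∃ M, x ∈ G M) : Tendsto (fun M => μ (G M)ᶜ) atTop (𝓝 0) := by
  have h := tendsto_measure_iInter_atTop (μ := μ) (fun M => (hmeas M).compl.nullMeasurableSet)
    (fun _ _ h => Set.compl_subset_compl.2 (hmono h)) ⟨0, measure_ne_top μ _⟩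
  have hnull : μ (⋂ M, (G M)ᶜ) = 0 := by
    rw [← Set.compl_iUnion]
    exact ae_iff.1 (hae.mono fun x hx => Set.mem_iUnion.2 hx)
  rwa [hnull] at h

lemma tendsto_log_div_of_le_of_le {u A C : ℕ → ℝ} {a : ℝ} (hC : ∀ n, 0 < C n)
    (hbd : ∀ n, 0 < n → Real.exp (A n) / C n ≤ u n ∧ u n ≤ C n * Real.exp (A n))
    (hA : Tendsto (fun n : ℕ => A n / n) atTop (𝓝 a))
    (hCt : Tendsto (fun n : ℕ => Real.log (C n) / n) atTop (𝓝 0)) :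
    Tendsto (fun n : ℕ => Real.log (u n) / n) atTop (𝓝 a) := by
  have hlow : Tendsto (fun n : ℕ => (A n - Real.log (C n)) / n) atTop (𝓝 a) := by
    simpa [sub_div] using hA.sub hCt
  have hup : Tendsto (fun n : ℕ => (A n + Real.log (C n)) / n) atTop (𝓝 a) := by
    simpa [add_div] using hA.add hCt
  refine tendsto_of_tendsto_of_tendsto_of_le_of_le' hlow hup ?_ ?_ <;>
    filter_upwards [eventually_gt_atTop 0] with n hn <;>
    refine div_le_div_of_nonneg_right ?_ n.cast_nonneg
  · have := Real.log_le_log (div_pos (Real.exp_pos _) (hC n)) (hbd n hn).1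
    rwa [Real.log_div (Real.exp_pos _).ne' (hC n).ne', Real.log_exp] at this
  · have hu := (div_pos (Real.exp_pos _) (hC n)).trans_le (hbd n hn).1
    have := Real.log_le_log hu (hbd n hn).2
    rwa [Real.log_mul (hC n).ne' (Real.exp_pos _).ne', Real.log_exp, add_comm] at this

section Shift

variable {I : Type*}

lemma lshift_iterate_apply (N : ℕ) (x : ℕ → I) (n : ℕ) : lshift^[N] x n = x (n + N) := by
  induction N generalizing x with
  | zero => rfl
  | succ N ih =>
    rw [Function.iterate_succ_apply, ih]
    simp [lshift, add_assoc]

lemma cyl_eq_pi (n : ℕ) (z : ℕ → I) : cyl n z = (Set.Iic n).pi fun s => {z s} := by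
  ext x
  simp [cyl]

lemma cyl_zero (z : ℕ → I) : cyl 0 z = {x | x 0 = z 0} := by
  ext x
  simp [cyl]

lemma image_lshift_iterate_cyl (N n : ℕ) (z : ℕ → I) :
    lshift^[N] '' cyl (N + n) z = cyl n (lshift^[N] z) := by
  ext w
  constructor
  · rintro ⟨y, hy, rfl⟩ s hs
    rw [lshift_iterate_apply, lshift_iterate_apply]
    exact hy _ (by omega)
  · intro hw
    refine ⟨fun s => if s < N then z s else w (s - N), fun s hs => ?_, funext fun s => ?_⟩
    · dsimp only
      split_ifs with h
      · rfl
      · have := hw (s - N) (by omega)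
        rwa [lshift_iterate_apply, Nat.sub_add_cancel (not_lt.1 h)] at this
    · simp [lshift_iterate_apply]

lemma cyl_zero_inter_preimage_subset_union (A : Set (ℕ → I)) (N : ℕ) (w₁ w₂ : ℕ → I) :
    cyl 0 w₁ ∩ lshift^[N] ⁻¹' cyl 0 w₂ ⊆
      {x | ∃ z, z ∈ A ∧ x ∈ cyl N z ∧ cyl N z ⊆ cyl 0 w₁ ∧ lshift^[N] '' cyl N z = cyl 0 w₂} ∪
        Aᶜ := by
  rintro x ⟨hx₁, hx₂⟩
  by_cases hxA : x ∈ A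
  · refine Or.inl ⟨x, hxA, fun _ _ => rfl, ?_, ?_⟩
    · rw [cyl_zero] at hx₁ ⊢
      exact fun y hy => (hy 0 (Nat.zero_le N)).trans hx₁
    · have hxN : lshift^[N] x 0 = w₂ 0 := hx₂ 0 le_rfl
      exact (image_lshift_iterate_cyl N 0 x).trans (by rw [cyl_zero, cyl_zero, hxN])
  · exact Or.inr hxA

variable [MeasurableSpace I]

/-- `cyl (n - 1) z` is the cylinder fixing the first `n` symbols of `z`. -/
def IsLocalWeakGibbs (μ : Measure (ℕ → I)) (φ : (ℕ → I) → ℝ) (P : ℝ) (K : ℕ → ℝ) (c : I → ℝ) :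
    Prop :=
  ∀ n : ℕ, 0 < n → ∀ z : ℕ → I,
    Real.exp (-(n : ℝ) * P + ∑ j ∈ Finset.range n, φ (lshift^[j] z)) /
        (c (z 0) * K n) ≤ (μ (cyl (n - 1) z)).toReal ∧
      (μ (cyl (n - 1) z)).toReal ≤
        c (z 0) * K n * Real.exp (-(n : ℝ) * P + ∑ j ∈ Finset.range n, φ (lshift^[j] z))

lemma goodSet_mono (μ : Measure (ℕ → I)) (P L ε : ℝ) : Monotone fun M => goodSet μ P L M ε :=
  fun _ _ hMM' _ hz j hj => hz j (hMM'.trans hj)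

lemma exists_mem_goodSet_of_tendsto {μ : Measure (ℕ → I)} {P L ε : ℝ} {z : ℕ → I} (hε : 0 < ε)
    (hpos : ∀ j, 0 < (μ (cyl j z)).toReal)
    (h : Tendsto (fun j : ℕ => Real.log (μ (cyl j z)).toReal / (j + 1)) atTop (𝓝 (L - P))) :
    ∃ M, z ∈ goodSet μ P L M ε := by
  obtain ⟨M, hM⟩ := eventually_atTop.1 (h.eventually
    (Ioo_mem_nhds (sub_lt_self (L - P) hε) (lt_add_of_pos_right (L - P) hε)))
  refine ⟨M, fun j hj => ?_⟩
  obtain ⟨hlo, hhi⟩ := hM j hj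
  have hj : (0 : ℝ) < j + 1 := by positivity
  rw [lt_div_iff₀ hj] at hlo
  rw [div_lt_iff₀ hj] at hhi
  exact ⟨(Real.lt_log_iff_exp_lt (hpos j)).1 (by linarith),
    (Real.log_lt_iff_lt_exp (hpos j)).1 (by linarith)⟩

section Gibbs

variable {μ : Measure (ℕ → I)} {φ : (ℕ → I) → ℝ} {P : ℝ} {K : ℕ → ℝ} {c : I → ℝ}

lemma measure_cyl_toReal_pos (hK : ∀ n, 0 < K n) (hc : ∀ i, 0 < c i)
    (hGibbs : IsLocalWeakGibbs μ φ P K c)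
    (j : ℕ) (z : ℕ → I) : 0 < (μ (cyl j z)).toReal :=
  (div_pos (Real.exp_pos _) (mul_pos (hc _) (hK _))).trans_le (hGibbs (j + 1) j.succ_pos z).1

lemma tendsto_log_measure_cyl_div (hK : ∀ n, 0 < K n) (hc : ∀ i, 0 < c i)
    (hKsub : Tendsto (fun n : ℕ => Real.log (K n) / n) atTop (𝓝 0))
    (hGibbs : IsLocalWeakGibbs μ φ P K c)
    {L : ℝ} {z : ℕ → I} (hz : Tendsto (fun n : ℕ => birkhoffSum lshift φ n z / n) atTop (𝓝 L)) :
    Tendsto (fun j : ℕ => Real.log (μ (cyl j z)).toReal / (j + 1)) atTop (𝓝 (L - P)) := by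
  have hA : Tendsto (fun n : ℕ => (-(n : ℝ) * P + ∑ j ∈ Finset.range n, φ (lshift^[j] z)) / n)
      atTop (𝓝 (L - P)) := by
    refine (hz.sub_const P).congr' ?_
    filter_upwards [eventually_ne_atTop 0] with n hn
    field_simp
    simp only [birkhoffSum]
    ring
  have hCt : Tendsto (fun n : ℕ => Real.log (c (z 0) * K n) / n) atTop (𝓝 0) := by
    simpa [Real.log_mul (hc _).ne' (hK _).ne', add_div] using
      (tendsto_const_div_atTop_nhds_zero_nat (Real.log (c (z 0)))).add hKsub
  have := (tendsto_log_div_of_le_of_le (fun n => mul_pos (hc (z 0)) (hK n))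
    (fun n hn => hGibbs n hn z) hA hCt).comp (tendsto_add_atTop_nat 1)
  refine this.congr fun j => ?_
  simp

theorem ae_exists_mem_goodSet [IsProbabilityMeasure μ] (herg : Ergodic (lshift (I := I)) μ)
    (hφ : Integrable φ μ) (hK : ∀ n, 0 < K n) (hc : ∀ i, 0 < c i)
    (hKsub : Tendsto (fun n : ℕ => Real.log (K n) / n) atTop (𝓝 0))
    (hGibbs : IsLocalWeakGibbs μ φ P K c)
    {ε : ℝ} (hε : 0 < ε) : ∀ᵐ z ∂μ, ∃ M, z ∈ goodSet μ P (∫ y, φ y ∂μ) M ε := by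
  filter_upwards [ae_tendsto_birkhoffSum_div herg hφ] with z hz
  exact exists_mem_goodSet_of_tendsto hε (measure_cyl_toReal_pos hK hc hGibbs · z)
    (tendsto_log_measure_cyl_div hK hc hKsub hGibbs hz)

end Gibbs

variable [Countable I]

lemma measurable_measure_cyl (μ : Measure (ℕ → I)) (n : ℕ) :
    Measurable fun z => μ (cyl n z) := by
  let g : (Set.Iic n → I) → ℝ≥0∞ := fun v => μ {x | ∀ s : Set.Iic n, x s ∈ measurableAtom (v s)}
  have hg : Measurable g := measurable_of_forall_mem_measurableAtom fun v v' hv' => by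
    rw [mem_measurableAtom_pi_iff] at hv'
    simp only [g, measurableAtom_eq_of_mem (hv' _)]
  have : (fun z => μ (cyl n z)) = g ∘ fun z s => z s := by
    funext z
    rw [cyl_eq_pi, measure_pi_singleton_eq_measure_pi_measurableAtom]
    simp [g, Set.pi]
  rw [this]
  exact hg.comp (measurable_pi_lambda _ fun s => measurable_pi_apply _)

lemma measurableSet_goodSet (μ : Measure (ℕ → I)) (P L : ℝ) (M : ℕ) (ε : ℝ) :
    MeasurableSet (goodSet μ P L M ε) := by
  simp only [goodSet, Set.ofPred_forall]
  refine .iInter fun j => .iInter fun _ => ?_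
  have h := (measurable_measure_cyl μ j).ennreal_toReal
  exact (measurableSet_lt measurable_const h).inter (measurableSet_lt h measurable_const)

lemma tendsto_measure_cyl_zero_inter_preimage {μ : Measure (ℕ → I)}
    (hmix : ∀ A B : Set (ℕ → I), MeasurableSet A → MeasurableSet B →
      Tendsto (fun N : ℕ => μ (A ∩ lshift^[N] ⁻¹' B)) atTop (𝓝 (μ A * μ B)))
    (w₁ w₂ : ℕ → I) :
    Tendsto (fun N : ℕ => μ (cyl 0 w₁ ∩ lshift^[N] ⁻¹' cyl 0 w₂)) atTop
      (𝓝 (μ (cyl 0 w₁) * μ (cyl 0 w₂))) := by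
  set atomCyl : (ℕ → I) → Set (ℕ → I) := fun w => {x | x 0 ∈ measurableAtom (w 0)}
  have hmeas : ∀ w, MeasurableSet (atomCyl w) := fun w =>
    measurable_pi_apply 0 (.measurableAtom_of_countable _)
  have hcyl : ∀ w, μ (cyl 0 w) = μ (atomCyl w) := fun w => by
    convert measure_pi_singleton_eq_measure_pi_measurableAtom μ {0} w using 2 <;>
      ext x <;> simp [cyl, atomCyl]
  have hinter : ∀ N ≠ 0, μ (cyl 0 w₁ ∩ lshift^[N] ⁻¹' cyl 0 w₂) =
      μ (atomCyl w₁ ∩ lshift^[N] ⁻¹' atomCyl w₂) := fun N hN => by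
    convert measure_pi_singleton_eq_measure_pi_measurableAtom μ {0, N}
      (Function.update (fun _ => w₂ 0) 0 (w₁ 0)) using 2 <;>
      ext x <;> simp [cyl, atomCyl, lshift_iterate_apply, hN]
  rw [hcyl, hcyl]
  exact (hmix _ _ (hmeas w₁) (hmeas w₂)).congr'
    ((eventually_ne_atTop 0).mono fun N hN => (hinter N hN).symm)

end Shift

theorem stmt10_general {I : Type*} [Countable I] [MeasurableSpace I]
    (μ : Measure (ℕ → I)) [IsProbabilityMeasure μ]
    (herg : Ergodic (lshift (I := I)) μ)
    (hmix : ∀ A B : Set (ℕ → I), MeasurableSet A → MeasurableSet B →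
      Filter.Tendsto (fun N : ℕ => μ (A ∩ lshift^[N] ⁻¹' B)) Filter.atTop
        (nhds (μ A * μ B)))
    (φ : (ℕ → I) → ℝ) (hφ : Integrable φ μ)
    (P : ℝ) (K : ℕ → ℝ) (c : I → ℝ)
    (hK1 : ∀ n, 1 ≤ K n)
    (hKsub : Filter.Tendsto (fun n : ℕ => Real.log (K n) / n) Filter.atTop (nhds 0))
    (hc : ∀ i, 1 ≤ c i)
    (hGibbs : ∀ n : ℕ, 0 < n → ∀ z : ℕ → I,
      Real.exp (-(n : ℝ) * P + ∑ j ∈ Finset.range n, φ (lshift^[j] z)) /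
          (c (z 0) * K n) ≤ (μ (cyl (n - 1) z)).toReal ∧
      (μ (cyl (n - 1) z)).toReal ≤
        c (z 0) * K n *
          Real.exp (-(n : ℝ) * P + ∑ j ∈ Finset.range n, φ (lshift^[j] z)))
    (w₁ w₂ : ℕ → I) (ε : ℝ) (hε : 0 < ε) :
    ∃ M₀ : ℕ, ∀ M ≥ M₀, ∃ N₀ : ℕ, ∀ N ≥ N₀,
      (1 / 2 : ℝ≥0∞) * μ (cyl 0 w₁) * μ (cyl 0 w₂) ≤
        μ {x : ℕ → I | ∃ z : ℕ → I,
          z ∈ goodSet μ P (∫ y, φ y ∂μ) M ε ∧ x ∈ cyl N z ∧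
          cyl N z ⊆ cyl 0 w₁ ∧ lshift^[N] '' cyl N z = cyl 0 w₂} := by
  set G := fun M => goodSet μ P (∫ y, φ y ∂μ) M ε
  have hG : Tendsto (fun M => μ (G M)ᶜ) atTop (𝓝 0) :=
    tendsto_measure_compl_of_ae_exists_mem (fun M => measurableSet_goodSet μ _ _ M ε)
      (goodSet_mono μ _ _ ε) (ae_exists_mem_goodSet herg hφ
        (fun n => zero_lt_one.trans_le (hK1 n)) (fun i => zero_lt_one.trans_le (hc i))
        hKsub hGibbs hε)
  rcases eq_or_ne (μ (cyl 0 w₁) * μ (cyl 0 w₂)) 0 with h0 | h0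
  · exact ⟨0, fun M _ => ⟨0, fun N _ => by simp [mul_assoc, h0]⟩⟩
  have hhalf : 1 / 2 * μ (cyl 0 w₁) * μ (cyl 0 w₂) < μ (cyl 0 w₁) * μ (cyl 0 w₂) := by
    rw [mul_assoc, one_div, ← ENNReal.div_eq_inv_mul]
    exact ENNReal.half_lt_self h0 (by finiteness)
  obtain ⟨M₀, hM₀⟩ := eventually_atTop.1 <| eventually_eventually_lt_of_le_add
    (tendsto_measure_cyl_zero_inter_preimage hmix w₁ w₂) hG
    (fun M N => (measure_mono (cyl_zero_inter_preimage_subset_union (G M) N w₁ w₂)).trans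
      (measure_union_le _ _)) hhalf
  exact ⟨M₀, fun M hM => (eventually_atTop.1 (hM₀ M hM)).imp fun N₀ hN₀ N hN => (hN₀ N hN).le⟩

/-- For a mixing ergodic local weak Gibbs measure, given two 0-cylinders `P₁, P₂` and
`ε > 0`, the union `S_N(M,ε)` of good `N`-cylinders inside `P₁` mapped by `σ^N` onto
`P₂` has measure at least `(1/2) μ̂(P₁) μ̂(P₂)` for `M`, `N` large. -/
theorem stmt10 {I : Type*} [Countable I] [MeasurableSpace I]
    (μ : Measure (ℕ → I)) [IsProbabilityMeasure μ]
    (hinv : MeasurePreserving (lshift (I := I)) μ μ)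
    (herg : Ergodic (lshift (I := I)) μ)
    (hmix : ∀ A B : Set (ℕ → I), MeasurableSet A → MeasurableSet B →
      Filter.Tendsto (fun N : ℕ => μ (A ∩ lshift^[N] ⁻¹' B)) Filter.atTop
        (nhds (μ A * μ B)))
    (φ : (ℕ → I) → ℝ) (hφ : Integrable φ μ)
    (P : ℝ) (K : ℕ → ℝ) (c : I → ℝ)
    (hK1 : ∀ n, 1 ≤ K n) (hKmono : Monotone K)
    (hKsub : Filter.Tendsto (fun n : ℕ => Real.log (K n) / n) Filter.atTop (nhds 0))
    (hc : ∀ i, 1 ≤ c i)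
    (hGibbs : ∀ n : ℕ, 0 < n → ∀ z : ℕ → I,
      Real.exp (-(n : ℝ) * P + ∑ j ∈ Finset.range n, φ (lshift^[j] z)) /
          (c (z 0) * K n) ≤ (μ (cyl (n - 1) z)).toReal ∧
      (μ (cyl (n - 1) z)).toReal ≤
        c (z 0) * K n *
          Real.exp (-(n : ℝ) * P + ∑ j ∈ Finset.range n, φ (lshift^[j] z)))
    (w₁ w₂ : ℕ → I) (ε : ℝ) (hε : 0 < ε) :
    ∃ M₀ : ℕ, ∀ M ≥ M₀, ∃ N₀ : ℕ, ∀ N ≥ N₀,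
      (1 / 2 : ℝ≥0∞) * μ (cyl 0 w₁) * μ (cyl 0 w₂) ≤
        μ {x : ℕ → I | ∃ z : ℕ → I,
          z ∈ goodSet μ P (∫ y, φ y ∂μ) M ε ∧ x ∈ cyl N z ∧
          cyl N z ⊆ cyl 0 w₁ ∧ lshift^[N] '' cyl N z = cyl 0 w₂} :=
  stmt10_general μ herg hmix φ hφ P K c hK1 hKsub hc hGibbs w₁ w₂ ε hε
end

section
/- Let f be a Markov transformation on [0,1] satisfying the bounded distortion property |f'(x)/f'(y) − 1| ≤ c|x−y|^α for x, y in the same element of P₀, together with uniform expansion. Then there is a constant C such that for every n, every element P of the partition P_n, and every measurable A ⊆ P: C^{-1} · λ(f^j(A))/λ(f^j(P)) ≤ λ(A)/λ(P) ≤ C · λ(f^j(A))/λ(f^j(P)) for j = 1, …, n+1, where λ is Lebesgue measure. -/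
/-!
Along an orbit, `(f^j)'(x) = ∏_{i<j} f'(f^i x)`. Two points `x, y` of a cylinder of `P_n` visit
the same elements of `P₀` up to time `n`; as `f^{n-i}` expands by a factor of order
`γ^{(n-i)/n₀}` while keeping `f^i x, f^i y` inside `[0,1]`, the mean value theorem gives
`|f^i x - f^i y| ≲ γ^{-(n-i)/n₀}`. The Hölder distortion condition then bounds
`(f^j)'(x) / (f^j)'(y)` by `∏_i (1 + c₀|f^i x - f^i y|^a) ≤ exp (c₀ ∑_i |f^i x - f^i y|^a)`,
a geometric series, uniformly in `n`. Finally `λ(f^j S) = ∫_S |(f^j)'|` for `S ⊆ P`, and a density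
that varies by a bounded factor on `P` makes the two ratios comparable.
-/

open Set Finset MeasureTheory ENNReal

/-- An itinerary cylinder of the Markov map `f`: the set of points whose first `n+1`
iterates visit the prescribed partition elements `w 0, …, w n`. -/
def itinCyl (f : ℝ → ℝ) (n : ℕ) (w : ℕ → Set ℝ) : Set ℝ :=
  {x : ℝ | ∀ j ≤ n, f^[j] x ∈ w j}

lemma mul_abs_sub_le_abs_sub_of_le_abs_deriv {g g' : ℝ → ℝ} {s : Set ℝ} {L : ℝ}
    (hs : s.OrdConnected) (hg : ∀ x ∈ s, HasDerivAt g (g' x) x) (hL : ∀ x ∈ s, L ≤ |g' x|)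
    {p q : ℝ} (hp : p ∈ s) (hq : q ∈ s) : L * |p - q| ≤ |g p - g q| := by
  wlog hpq : p < q generalizing p q
  · rcases (not_lt.1 hpq).eq_or_lt with rfl | hqp
    · simp
    · simpa only [abs_sub_comm] using this hq hp hqp
  have hIcc := hs.out hp hq
  obtain ⟨ξ, hξ, hslope⟩ := exists_hasDerivAt_eq_slope g g' hpq
    (fun z hz => (hg z (hIcc hz)).continuousAt.continuousWithinAt)
    (fun z hz => hg z (hIcc (Ioo_subset_Icc_self hz)))
  have hLξ := hL ξ (hIcc (Ioo_subset_Icc_self hξ))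
  rw [hslope, abs_div] at hLξ
  rw [abs_sub_comm p, abs_sub_comm (g p)]
  calc L * |q - p| ≤ |g q - g p| / |q - p| * |q - p| := by gcongr
    _ = |g q - g p| := div_mul_cancel₀ _ (abs_pos.2 (sub_pos.2 hpq).ne').ne'

lemma sum_range_pow_div_le {r : ℝ} (hr0 : 0 ≤ r) (hr1 : r < 1) {n₀ : ℕ} (hn₀ : 0 < n₀) (N : ℕ) :
    ∑ m ∈ range N, r ^ (m / n₀) ≤ n₀ * (1 - r)⁻¹ := by
  have hmaps : ∀ m ∈ range N, m / n₀ ∈ range N := fun m hm =>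
    mem_range.2 ((Nat.div_le_self m n₀).trans_lt (mem_range.1 hm))
  have hfiber : ∀ q, #{m ∈ range N | m / n₀ = q} ≤ n₀ := fun q => calc
    #{m ∈ range N | m / n₀ = q} ≤ #(Ico (n₀ * q) (n₀ * q + n₀)) := by
      refine card_le_card fun m hm => ?_
      have hq := (mem_filter.1 hm).2
      rw [Finset.mem_Ico, ← hq]
      exact ⟨Nat.mul_div_le m n₀, by rw [← Nat.mul_succ]; exact Nat.lt_mul_div_succ m hn₀⟩
    _ = n₀ := by simp
  rw [← sum_fiberwise_of_maps_to hmaps]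
  calc ∑ q ∈ range N, ∑ m ∈ range N with m / n₀ = q, r ^ (m / n₀)
      ≤ ∑ q ∈ range N, n₀ * r ^ q := sum_le_sum fun q _ => by
        rw [sum_congr rfl fun m hm => by rw [(mem_filter.1 hm).2], sum_const, nsmul_eq_mul]
        gcongr
        exact_mod_cast hfiber q
    _ = n₀ * ∑ q ∈ range N, r ^ q := (mul_sum _ _ _).symm
    _ ≤ n₀ * (1 - r)⁻¹ := by
        gcongr
        rw [← tsum_geometric_of_lt_one hr0 hr1]
        exact (summable_geometric_of_lt_one hr0 hr1).sum_le_tsum _ fun i _ => by positivity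

lemma abs_le_one_add_mul_abs_of_abs_div_sub_one_le {r s e : ℝ} (hs : s ≠ 0)
    (h : |r / s - 1| ≤ e) : |r| ≤ (1 + e) * |s| := by
  have hrs := abs_sub_abs_le_abs_sub (r / s) 1
  rw [abs_one] at hrs
  calc |r| = |r / s| * |s| := by rw [← abs_mul, div_mul_cancel₀ _ hs]
    _ ≤ (1 + e) * |s| := by gcongr; linarith

lemma volume_image_eq_setLIntegral_abs_deriv {g g' : ℝ → ℝ} {s : Set ℝ} (hs : MeasurableSet s)
    (hg : ∀ x ∈ s, HasDerivWithinAt g (g' x) s x) (hinj : InjOn g s) :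
    volume (g '' s) = ∫⁻ x in s, ENNReal.ofReal |g' x| := by
  simpa using lintegral_image_eq_lintegral_abs_deriv_mul hs hg hinj 1

lemma measure_mul_setLIntegral_le {α : Type*} [MeasurableSpace α] {μ : Measure α}
    {D : α → ℝ≥0∞} {C : ℝ≥0∞} {s t : Set α} (hs : MeasurableSet s) (ht : MeasurableSet t)
    (hC : C * μ t ≠ ∞) (hD : ∀ x ∈ t, ∀ z ∈ s, D x ≤ C * D z) :
    μ s * ∫⁻ x in t, D x ∂μ ≤ C * μ t * ∫⁻ z in s, D z ∂μ := calc
  μ s * ∫⁻ x in t, D x ∂μ = ∫⁻ _ in s, ∫⁻ x in t, D x ∂μ ∂μ := by rw [setLIntegral_const, mul_comm]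
  _ ≤ ∫⁻ z in s, C * μ t * D z ∂μ := setLIntegral_mono' hs fun z hz => calc
      ∫⁻ x in t, D x ∂μ ≤ ∫⁻ _ in t, C * D z ∂μ := setLIntegral_mono' ht fun x hx => hD x hx z hz
      _ = C * μ t * D z := by rw [setLIntegral_const]; ring
  _ = C * μ t * ∫⁻ z in s, D z ∂μ := lintegral_const_mul' _ _ hC

def derivIterate (f f' : ℝ → ℝ) (j : ℕ) (x : ℝ) : ℝ :=
  ∏ i ∈ range j, f' (f^[i] x)

lemma derivIterate_add (f f' : ℝ → ℝ) (m k : ℕ) (x : ℝ) :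
    derivIterate f f' (m + k) x = derivIterate f f' m x * derivIterate f f' k (f^[m] x) := by
  rw [derivIterate, prod_range_add]
  congr 1
  exact prod_congr rfl fun i _ => by rw [add_comm, Function.iterate_add_apply]

lemma hasDerivAt_iterate {f f' : ℝ → ℝ} {j : ℕ} {x : ℝ}
    (hf : ∀ i < j, HasDerivAt f (f' (f^[i] x)) (f^[i] x)) :
    HasDerivAt f^[j] (derivIterate f f' j x) x := by
  induction j with
  | zero => simpa [derivIterate] using hasDerivAt_id x
  | succ j ih =>
    rw [Function.iterate_succ', derivIterate, prod_range_succ, mul_comm]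
    exact (hf j j.lt_succ_self).comp x (ih fun i hi => hf i (by omega))

lemma pow_le_abs_derivIterate {f f' : ℝ → ℝ} {U : Set ℝ} {σ : ℝ} (hσ : 0 ≤ σ)
    (hσU : ∀ x ∈ U, σ ≤ |f' x|) {j : ℕ} {x : ℝ} (hx : ∀ i < j, f^[i] x ∈ U) :
    σ ^ j ≤ |derivIterate f f' j x| := by
  rw [derivIterate, abs_prod]
  calc σ ^ j = ∏ _i ∈ range j, σ := by simp
    _ ≤ _ := prod_le_prod (fun _ _ => hσ) fun i hi => hσU _ (hx i (mem_range.1 hi))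

lemma itinCyl_succ (f : ℝ → ℝ) (n : ℕ) (w : ℕ → Set ℝ) :
    itinCyl f (n + 1) w = w 0 ∩ f ⁻¹' itinCyl f n (fun i => w (i + 1)) := by
  ext x
  refine ⟨fun h => ⟨h 0 (Nat.zero_le _), fun j hj => h (j + 1) (by omega)⟩, ?_⟩
  rintro ⟨h0, h⟩ (_ | j) hj
  exacts [h0, h j (by omega)]

lemma ordConnected_itinCyl {f : ℝ → ℝ} {w : ℕ → Set ℝ} (hw : ∀ j, (w j).OrdConnected)
    (hf : ∀ j, MonotoneOn f (w j) ∨ AntitoneOn f (w j)) (n : ℕ) :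
    (itinCyl f n w).OrdConnected := by
  induction n generalizing w with
  | zero => simpa [itinCyl] using hw 0
  | succ n ih =>
    have hcyl := ih (fun j => hw (j + 1)) (fun j => hf (j + 1))
    obtain ⟨u, hu, heq⟩ := (hf 0).elim hcyl.preimage_monotoneOn hcyl.preimage_antitoneOn
    rw [itinCyl_succ, heq]
    exact (hw 0).inter hu

lemma injOn_iterate_itinCyl {f : ℝ → ℝ} {w : ℕ → Set ℝ} (hf : ∀ j, InjOn f (w j)) {n j : ℕ}
    (hj : j ≤ n + 1) : InjOn f^[j] (itinCyl f n w) := by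
  induction j with
  | zero => exact injOn_id _
  | succ j ih =>
    rw [Function.iterate_succ']
    exact (hf j).comp (ih (by omega)) fun x hx => hx j (by omega)

lemma volume_image_iterate_eq_setLIntegral {f f' : ℝ → ℝ} {U : Set ℝ}
    (hderiv : ∀ x ∈ U, HasDerivAt f (f' x) x) {n : ℕ} {w : ℕ → Set ℝ} (hwU : ∀ j, w j ⊆ U)
    (hinj : ∀ j, InjOn f (w j)) {j : ℕ} (hj : j ≤ n + 1) {s : Set ℝ} (hs : s ⊆ itinCyl f n w)
    (hsm : MeasurableSet s) :
    volume (f^[j] '' s) = ∫⁻ x in s, ENNReal.ofReal |derivIterate f f' j x| :=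
  volume_image_eq_setLIntegral_abs_deriv hsm
    (fun x hx => (hasDerivAt_iterate fun i hi =>
      hderiv _ (hwU i (hs hx i (by omega)))).hasDerivWithinAt)
    ((injOn_iterate_itinCyl hinj hj).mono hs)

structure UniformlyExpanding (f f' : ℝ → ℝ) (U : Set ℝ) (σ γ : ℝ) (n₀ : ℕ) : Prop where
  σ_pos : 0 < σ
  le_abs_deriv : ∀ x ∈ U, σ ≤ |f' x|
  n₀_pos : 0 < n₀
  one_lt_γ : 1 < γ
  le_abs_derivIterate : ∀ x, (∀ j < n₀, f^[j] x ∈ U) → γ ≤ |derivIterate f f' n₀ x|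

/-- `exp (c₀ · B)`, where `B` bounds `∑_{i ≤ n} |f^i x - f^i y|^a` on a cylinder of `P_n`. -/
noncomputable def distortionConst (σ γ c₀ a : ℝ) (n₀ : ℕ) : ℝ :=
  Real.exp (c₀ * ((min 1 (σ ^ n₀))⁻¹ ^ a * (n₀ * (1 - γ⁻¹ ^ a)⁻¹)))

lemma distortionConst_pos (σ γ c₀ a : ℝ) (n₀ : ℕ) : 0 < distortionConst σ γ c₀ a n₀ :=
  Real.exp_pos _

namespace UniformlyExpanding

variable {f f' : ℝ → ℝ} {U : Set ℝ} {σ γ : ℝ} {n₀ : ℕ}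

lemma min_one_pow_pos (hE : UniformlyExpanding f f' U σ γ n₀) : 0 < min 1 (σ ^ n₀) :=
  lt_min one_pos (pow_pos hE.σ_pos n₀)

lemma γ_pos (hE : UniformlyExpanding f f' U σ γ n₀) : 0 < γ := one_pos.trans hE.one_lt_γ

lemma min_mul_pow_le_abs_derivIterate (hE : UniformlyExpanding f f' U σ γ n₀) (j : ℕ) {x : ℝ}
    (hx : ∀ i < j, f^[i] x ∈ U) : min 1 (σ ^ n₀) * γ ^ (j / n₀) ≤ |derivIterate f f' j x| := by
  induction j using Nat.strong_induction_on generalizing x with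
  | _ j ih =>
  rcases lt_or_ge j n₀ with hj | hj
  · rw [Nat.div_eq_of_lt hj, pow_zero, mul_one]
    refine le_trans ?_ (pow_le_abs_derivIterate hE.σ_pos.le hE.le_abs_deriv hx)
    rcases le_or_gt 1 σ with hσ | hσ
    · exact (min_le_left _ _).trans (one_le_pow₀ hσ)
    · exact (min_le_right _ _).trans (pow_le_pow_of_le_one hE.σ_pos.le hσ.le hj.le)
  · obtain ⟨k, rfl⟩ := Nat.exists_eq_add_of_le hj
    have hk : min 1 (σ ^ n₀) * γ ^ (k / n₀) ≤ |derivIterate f f' k (f^[n₀] x)| :=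
      ih k (by have := hE.n₀_pos; omega) fun i hi => by
        rw [← Function.iterate_add_apply]
        exact hx _ (by omega)
    have hγ : γ ≤ |derivIterate f f' n₀ x| := hE.le_abs_derivIterate x fun i hi => hx i (by omega)
    rw [derivIterate_add, abs_mul, Nat.add_div_left _ hE.n₀_pos, pow_succ, ← mul_assoc, mul_comm]
    have := hE.min_one_pow_pos
    have := hE.γ_pos
    exact mul_le_mul hγ hk (by positivity) (abs_nonneg _)

lemma deriv_ne_zero (hE : UniformlyExpanding f f' U σ γ n₀) {x : ℝ} (hx : x ∈ U) : f' x ≠ 0 :=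
  abs_pos.1 (hE.σ_pos.trans_le (hE.le_abs_deriv x hx))

lemma mul_abs_iterate_sub_le_one (hE : UniformlyExpanding f f' U σ γ n₀)
    (hderiv : ∀ x ∈ U, HasDerivAt f (f' x) x) {n : ℕ} {w : ℕ → Set ℝ} (hwU : ∀ j, w j ⊆ U)
    (hw01 : ∀ j, w j ⊆ Icc 0 1) (hP : (itinCyl f n w).OrdConnected) {x y : ℝ}
    (hx : x ∈ itinCyl f n w) (hy : y ∈ itinCyl f n w) {i : ℕ} (hi : i ≤ n) :
    min 1 (σ ^ n₀) * γ ^ ((n - i) / n₀) * |f^[i] x - f^[i] y| ≤ 1 := by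
  have horbit : ∀ z ∈ f^[i] '' itinCyl f n w, ∀ m < n - i, f^[m] z ∈ U := by
    rintro _ ⟨u, hu, rfl⟩ m hm
    rw [← Function.iterate_add_apply]
    exact hwU _ (hu _ (by omega))
  have hcont : ContinuousOn f^[i] (itinCyl f n w) := fun z hz =>
    (hasDerivAt_iterate (j := i) fun m hm => hderiv _ (hwU m (hz m (by omega)))).continuousAt
      |>.continuousWithinAt
  have hmvt := mul_abs_sub_le_abs_sub_of_le_abs_deriv (hP.isPreconnected.image _ hcont).ordConnected
    (fun z hz => hasDerivAt_iterate fun m hm => hderiv _ (horbit z hz m hm))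
    (fun z hz => hE.min_mul_pow_le_abs_derivIterate _ (horbit z hz))
    (mem_image_of_mem _ hx) (mem_image_of_mem _ hy)
  have hn : ∀ u, f^[n - i] (f^[i] u) = f^[n] u := fun u => by
    rw [← Function.iterate_add_apply, Nat.sub_add_cancel hi]
  rw [hn, hn] at hmvt
  obtain ⟨hx0, hx1⟩ := hw01 n (hx n le_rfl)
  obtain ⟨hy0, hy1⟩ := hw01 n (hy n le_rfl)
  exact hmvt.trans (abs_sub_le_of_nonneg_of_le hx0 hx1 hy0 hy1)

lemma sum_rpow_abs_iterate_sub_le (hE : UniformlyExpanding f f' U σ γ n₀)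
    (hderiv : ∀ x ∈ U, HasDerivAt f (f' x) x) {n : ℕ} {w : ℕ → Set ℝ} (hwU : ∀ j, w j ⊆ U)
    (hw01 : ∀ j, w j ⊆ Icc 0 1) (hP : (itinCyl f n w).OrdConnected) {x y : ℝ}
    (hx : x ∈ itinCyl f n w) (hy : y ∈ itinCyl f n w) {a : ℝ} (ha : 0 < a) {j : ℕ}
    (hj : j ≤ n + 1) :
    ∑ i ∈ range j, |f^[i] x - f^[i] y| ^ a ≤ (min 1 (σ ^ n₀))⁻¹ ^ a * (n₀ * (1 - γ⁻¹ ^ a)⁻¹) := by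
  set c := min 1 (σ ^ n₀)
  have hc := hE.min_one_pow_pos
  have hγ := hE.γ_pos
  have hterm : ∀ i ≤ n, |f^[i] x - f^[i] y| ^ a ≤ c⁻¹ ^ a * (γ⁻¹ ^ a) ^ ((n - i) / n₀) := by
    intro i hi
    have hd : |f^[i] x - f^[i] y| ≤ c⁻¹ * γ⁻¹ ^ ((n - i) / n₀) := by
      rw [inv_pow, ← mul_inv, ← one_div, le_div_iff₀ (by positivity), mul_comm]
      exact hE.mul_abs_iterate_sub_le_one hderiv hwU hw01 hP hx hy hi
    calc |f^[i] x - f^[i] y| ^ a ≤ (c⁻¹ * γ⁻¹ ^ ((n - i) / n₀)) ^ a :=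
          Real.rpow_le_rpow (abs_nonneg _) hd ha.le
      _ = c⁻¹ ^ a * (γ⁻¹ ^ a) ^ ((n - i) / n₀) := by
          rw [Real.mul_rpow (by positivity) (by positivity), Real.rpow_pow_comm (by positivity)]
  calc ∑ i ∈ range j, |f^[i] x - f^[i] y| ^ a
      ≤ ∑ i ∈ range (n + 1), |f^[i] x - f^[i] y| ^ a :=
        sum_le_sum_of_subset_of_nonneg (range_subset_range.2 hj) fun _ _ _ => by positivity
    _ ≤ ∑ i ∈ range (n + 1), c⁻¹ ^ a * (γ⁻¹ ^ a) ^ ((n - i) / n₀) :=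
        sum_le_sum fun i hi => hterm i (Nat.lt_succ_iff.1 (mem_range.1 hi))
    _ = c⁻¹ ^ a * ∑ m ∈ range (n + 1), (γ⁻¹ ^ a) ^ (m / n₀) := by
        rw [← mul_sum]
        simpa using
          congrArg (c⁻¹ ^ a * ·) (sum_range_reflect (fun m => (γ⁻¹ ^ a) ^ (m / n₀)) (n + 1))
    _ ≤ c⁻¹ ^ a * (n₀ * (1 - γ⁻¹ ^ a)⁻¹) := by
        gcongr
        exact sum_range_pow_div_le (by positivity)
          (Real.rpow_lt_one (by positivity) (inv_lt_one_of_one_lt₀ hE.one_lt_γ) ha) hE.n₀_pos _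

lemma abs_derivIterate_le (hE : UniformlyExpanding f f' U σ γ n₀)
    (hderiv : ∀ x ∈ U, HasDerivAt f (f' x) x) {n : ℕ} {w : ℕ → Set ℝ} (hwU : ∀ j, w j ⊆ U)
    (hw01 : ∀ j, w j ⊆ Icc 0 1) (hP : (itinCyl f n w).OrdConnected) {c₀ a : ℝ} (hc₀ : 0 ≤ c₀)
    (ha : 0 < a) (hdist : ∀ j, ∀ p ∈ w j, ∀ q ∈ w j, |f' p / f' q - 1| ≤ c₀ * |p - q| ^ a)
    {x y : ℝ} (hx : x ∈ itinCyl f n w) (hy : y ∈ itinCyl f n w) {j : ℕ} (hj : j ≤ n + 1) :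
    |derivIterate f f' j x| ≤ distortionConst σ γ c₀ a n₀ * |derivIterate f f' j y| := by
  have hfactor : ∀ i ∈ range j,
      |f' (f^[i] x)| ≤ (1 + c₀ * |f^[i] x - f^[i] y| ^ a) * |f' (f^[i] y)| := by
    intro i hi
    have hi : i ≤ n := by have := mem_range.1 hi; omega
    exact abs_le_one_add_mul_abs_of_abs_div_sub_one_le (hE.deriv_ne_zero (hwU i (hy i hi)))
      (hdist i _ (hx i hi) _ (hy i hi))
  rw [derivIterate, derivIterate, abs_prod, abs_prod]
  calc ∏ i ∈ range j, |f' (f^[i] x)|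
      ≤ ∏ i ∈ range j, (1 + c₀ * |f^[i] x - f^[i] y| ^ a) * |f' (f^[i] y)| :=
        prod_le_prod (fun _ _ => abs_nonneg _) hfactor
    _ = (∏ i ∈ range j, (1 + c₀ * |f^[i] x - f^[i] y| ^ a)) * ∏ i ∈ range j, |f' (f^[i] y)| :=
        prod_mul_distrib
    _ ≤ Real.exp (∑ i ∈ range j, c₀ * |f^[i] x - f^[i] y| ^ a) * ∏ i ∈ range j, |f' (f^[i] y)| := by
        gcongr
        exact Real.prod_one_add_le_exp_sum _ fun i => by positivity
    _ ≤ distortionConst σ γ c₀ a n₀ * ∏ i ∈ range j, |f' (f^[i] y)| := by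
        rw [← mul_sum, distortionConst]
        gcongr
        exact hE.sum_rpow_abs_iterate_sub_le hderiv hwU hw01 hP hx hy ha hj

end UniformlyExpanding

theorem stmt13_general (f f' : ℝ → ℝ) (P₀ : Set (Set ℝ)) (σ γ c₀ a : ℝ) (n₀ : ℕ)
    (hint : ∀ Q ∈ P₀, ∃ u v : ℝ, u < v ∧ Q = Set.Ioo u v ∧ Q ⊆ Set.Icc (0 : ℝ) 1)
    (hinj : ∀ Q ∈ P₀, Set.InjOn f Q)
    (hderiv : ∀ x ∈ ⋃₀ P₀, HasDerivAt f (f' x) x)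
    (hσ : 0 < σ) (hσ' : ∀ x ∈ ⋃₀ P₀, σ ≤ |f' x|)
    (hn₀ : 0 < n₀) (hγ : 1 < γ)
    (hexp : ∀ x : ℝ, (∀ j < n₀, f^[j] x ∈ ⋃₀ P₀) →
      γ ≤ |∏ j ∈ Finset.range n₀, f' (f^[j] x)|)
    (hc₀ : 0 < c₀) (ha : 0 < a)
    (hdist : ∀ Q ∈ P₀, ∀ x ∈ Q, ∀ y ∈ Q, |f' x / f' y - 1| ≤ c₀ * |x - y| ^ a) :
    ∃ C : ℝ, 0 < C ∧ ∀ (n : ℕ) (w : ℕ → Set ℝ), (∀ j, w j ∈ P₀) →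
      ∀ A : Set ℝ, MeasurableSet A → A ⊆ itinCyl f n w → ∀ j ≤ n + 1,
        volume A * volume (f^[j] '' itinCyl f n w) ≤
          ENNReal.ofReal C * volume (f^[j] '' A) * volume (itinCyl f n w) ∧
        volume (f^[j] '' A) * volume (itinCyl f n w) ≤
          ENNReal.ofReal C * volume A * volume (f^[j] '' itinCyl f n w) := by
  have hE : UniformlyExpanding f f' (⋃₀ P₀) σ γ n₀ := ⟨hσ, hσ', hn₀, hγ, hexp⟩
  have hQ : ∀ Q ∈ P₀, Q.OrdConnected ∧ Q ⊆ Icc 0 1 ∧ (MonotoneOn f Q ∨ AntitoneOn f Q) := by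
    intro Q hQ
    obtain ⟨u, v, huv, rfl, h01⟩ := hint Q hQ
    refine ⟨ordConnected_Ioo, h01, (ContinuousOn.strictMonoOn_of_injOn_Ioo huv
      (fun x hx => (hderiv x ⟨_, hQ, hx⟩).continuousAt.continuousWithinAt) (hinj _ hQ)).imp
      StrictMonoOn.monotoneOn StrictAntiOn.antitoneOn⟩
  refine ⟨distortionConst σ γ c₀ a n₀, distortionConst_pos .., fun n w hw A hA hAP j hj => ?_⟩
  set P := itinCyl f n w
  have hwU : ∀ j, w j ⊆ ⋃₀ P₀ := fun j => subset_sUnion_of_mem (hw j)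
  have hw01 : ∀ j, w j ⊆ Icc 0 1 := fun j => (hQ _ (hw j)).2.1
  have hP : P.OrdConnected :=
    ordConnected_itinCyl (fun j => (hQ _ (hw j)).1) (fun j => (hQ _ (hw j)).2.2) n
  have hPfin : volume P ≠ ∞ :=
    measure_ne_top_of_subset (fun x hx => hw01 0 (hx 0 n.zero_le)) (by simp)
  have hD : ∀ x ∈ P, ∀ z ∈ P, ENNReal.ofReal |derivIterate f f' j x| ≤
      ENNReal.ofReal (distortionConst σ γ c₀ a n₀) * ENNReal.ofReal |derivIterate f f' j z| := by
    intro x hx z hz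
    rw [← ENNReal.ofReal_mul (distortionConst_pos ..).le]
    exact ENNReal.ofReal_le_ofReal (hE.abs_derivIterate_le hderiv hwU hw01 hP hc₀.le ha
      (fun j => hdist _ (hw j)) hx hz hj)
  have hinjw : ∀ j, InjOn f (w j) := fun j => hinj _ (hw j)
  rw [volume_image_iterate_eq_setLIntegral hderiv hwU hinjw hj hAP hA,
    volume_image_iterate_eq_setLIntegral hderiv hwU hinjw hj le_rfl hP.measurableSet]
  constructor
  · simpa only [mul_right_comm] using measure_mul_setLIntegral_le hA hP.measurableSet
      (mul_ne_top ofReal_ne_top hPfin) fun x hx z hz => hD x hx z (hAP hz)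
  · simpa only [mul_comm] using measure_mul_setLIntegral_le hP.measurableSet hA
      (mul_ne_top ofReal_ne_top (measure_ne_top_of_subset hAP hPfin))
      fun x hx z hz => hD x (hAP hx) z hz

/-- Bounded distortion for Markov transformations: under the distortion condition
`|f'(x)/f'(y) − 1| ≤ c₀|x−y|^a` on partition elements and uniform expansion, there is
`C` such that for every element `P` of the `n`-th refined partition, every measurable
`A ⊆ P` and every `j ≤ n+1`, `λ(A)/λ(P)` and `λ(fʲA)/λ(fʲP)` are `C`-comparable. -/
theorem stmt13 (f f' : ℝ → ℝ) (P₀ : Set (Set ℝ)) (σ γ c₀ a : ℝ) (n₀ : ℕ)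
    (hcount : P₀.Countable)
    (hint : ∀ Q ∈ P₀, ∃ u v : ℝ, u < v ∧ Q = Set.Ioo u v ∧ Q ⊆ Set.Icc (0 : ℝ) 1)
    (hdisj : ∀ Q ∈ P₀, ∀ Q' ∈ P₀, Q ≠ Q' → Q ∩ Q' = ∅)
    (hfull : volume (Set.Icc (0 : ℝ) 1 \ ⋃₀ P₀) = 0)
    (hmarkov : ∀ Q ∈ P₀, ∀ Q' ∈ P₀, (f '' Q ∩ Q').Nonempty → Q' ⊆ f '' Q)
    (hinj : ∀ Q ∈ P₀, Set.InjOn f Q)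
    (hderiv : ∀ x ∈ ⋃₀ P₀, HasDerivAt f (f' x) x)
    (hσ : 0 < σ) (hσ' : ∀ x ∈ ⋃₀ P₀, σ ≤ |f' x|)
    (hn₀ : 0 < n₀) (hγ : 1 < γ)
    (hexp : ∀ x : ℝ, (∀ j < n₀, f^[j] x ∈ ⋃₀ P₀) →
      γ ≤ |∏ j ∈ Finset.range n₀, f' (f^[j] x)|)
    (hc₀ : 0 < c₀) (ha : 0 < a) (ha' : a ≤ 1)
    (hdist : ∀ Q ∈ P₀, ∀ x ∈ Q, ∀ y ∈ Q, |f' x / f' y - 1| ≤ c₀ * |x - y| ^ a) :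
    ∃ C : ℝ, 0 < C ∧ ∀ (n : ℕ) (w : ℕ → Set ℝ), (∀ j, w j ∈ P₀) →
      ∀ A : Set ℝ, MeasurableSet A → A ⊆ itinCyl f n w → ∀ j ≤ n + 1,
        volume A * volume (f^[j] '' itinCyl f n w) ≤
          ENNReal.ofReal C * volume (f^[j] '' A) * volume (itinCyl f n w) ∧
        volume (f^[j] '' A) * volume (itinCyl f n w) ≤
          ENNReal.ofReal C * volume A * volume (f^[j] '' itinCyl f n w) :=
  stmt13_general f f' P₀ σ γ c₀ a n₀ hint hinj hderiv hσ hσ' hn₀ hγ hexp hc₀ ha hdist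
end

section
/- Let μ̂ be a σ-invariant Gibbs measure on a topologically mixing countable Markov chain and let Z = ∩_j ∪_{J ∈ J_j} J be a pattern set built from nested families of cylinders (J̃_j of depth d̃_j, J_j of depth d_j with d_{j-1} < d̃_j ≤ d_j, J_j < J̃_j < J_{j-1}, each J̃_j ∈ J̃_j containing a unique J_j ∈ J_j). Assume constants α_j, β_j, γ_j, δ_j with e^{−α_j} ≤ μ̂(J̃_j)/μ̂(J_{j-1}) ≤ e^{−β_j}, e^{−γ_j} ≤ μ̂(J_j)/μ̂(J̃_j), ∑_{J̃_j ⊆ J_{j-1}} μ̂(J̃_j) ≥ δ_j μ̂(J_{j-1}), and liminf_j (α_1+…+α_j+γ_1+…+γ_j)/j^η > 0 for some η > 1. Then Dim_μ̂(Z) ≥ liminf_{j→∞} [(β_1+…+β_j) − log(1/(δ_1⋯δ_{j+1}))] / [(α_1+…+α_j)+(γ_1+…+γ_j)], where Dim_μ̂ is the Carathéodory dimension with family all cylinders and set function μ̂. -/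
open MeasureTheory Filter Finset ENNReal

/-- The Carathéodory pre-measure from coverings by cylinders of depth at least `N`,
with set function `μ̂^α`, in the limit `N → ∞`. -/
noncomputable def cylM {I : Type*} [MeasurableSpace I] (μ : Measure (ℕ → I))
    (α : ℝ) (E : Set (ℕ → I)) : ℝ≥0∞ :=
  ⨆ N : ℕ, ⨅ (c : ℕ → ℕ × (ℕ → I))
    (_ : (∀ i, N ≤ (c i).1) ∧ E ⊆ ⋃ i, cyl (c i).1 (c i).2),
    ∑' i, (μ (cyl (c i).1 (c i).2)) ^ α

/-- The `μ̂`-dimension (Carathéodory dimension with family the cylinders and set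
function `μ̂`). -/
noncomputable def cylDim {I : Type*} [MeasurableSpace I] (μ : Measure (ℕ → I))
    (E : Set (ℕ → I)) : ℝ≥0∞ :=
  sInf ((fun α : ℝ => ENNReal.ofReal α) '' {α : ℝ | 0 ≤ α ∧ cylM μ α E = 0})


/-!
Frostman's mass distribution principle. Put mass 1 on the root cylinder `J 0`; a cylinder `N` of
`J j` hands its mass to the cylinders of `Jt (j + 1)` below it, and each of these passes it on to
its unique child in `J (j + 1)`. Cylinders need not be measurable, so `μ` is only countably
subadditive on them, and `N` splits its mass not in proportion to `μ` but along a flow from `N`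
to the cylinders of `Jt (j + 1)` that carries at most `μ C` through every cylinder `C` and has
value at least `δ_{j+1} μ N` by the abundance hypothesis. So a cylinder `C` between `N` and the
next generation receives at most `mass N * μ C / (δ_{j+1} μ N)`. Inductively a cylinder of `J j`
carries mass at most `e^{-(β₁+⋯+β_j)} / (δ₁⋯δ_j)`, while its measure is at least
`e^{-(α₁+⋯+α_j+γ₁+⋯+γ_j)} μ(J 0)`, and `μ(J 0) > 0` by the Gibbs property. For `0 ≤ a` below the
liminf (hence `a ≤ 1`) this gives `mass C ≤ c μ(C)^a` for every cylinder `C`. Any cover of the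
pattern set by cylinders carries the whole unit mass, so `∑ μ(C_i)^a ≥ 1/c`.
-/
theorem ENNReal.exists_le_tsum_eq_min_nat (v : ℕ → ℝ≥0∞) (b : ℝ≥0∞) :
    ∃ w ≤ v, ∑' n, w n = min b (∑' n, v n) := by
  set S : ℕ → ℝ≥0∞ := fun n => min b (∑ k ∈ range n, v k) with hSdef
  have hS : Monotone S := fun m n h =>
    min_le_min le_rfl (sum_le_sum_of_subset (range_subset_range.2 h))
  have htel : ∀ N, ∑ n ∈ range N, (S (n + 1) - S n) = S N := by
    intro N
    induction N with
    | zero => simp [hSdef]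
    | succ N ih => rw [sum_range_succ, ih, add_tsub_cancel_of_le (hS N.le_succ)]
  -- allocate greedily: `w n` is the increase of the partial sums of `v` capped at `b`
  refine ⟨fun n => S (n + 1) - S n, fun n => ?_, ?_⟩
  · rw [tsub_le_iff_left]
    simp only [hSdef, sum_range_succ, ← min_add_add_right]
    exact min_le_min le_self_add le_rfl
  · rw [ENNReal.tsum_eq_iSup_nat, ENNReal.tsum_eq_iSup_nat]
    simp only [htel]
    exact (inf_iSup_eq b _).symm

theorem ENNReal.exists_le_tsum_eq_min {ι : Type*} [Countable ι] (v : ι → ℝ≥0∞) (b : ℝ≥0∞) :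
    ∃ w ≤ v, ∑' i, w i = min b (∑' i, v i) := by
  obtain ⟨e, he⟩ := exists_injective_nat ι
  obtain ⟨w, hwv, hw⟩ := exists_le_tsum_eq_min_nat (Function.extend e v 0) b
  refine ⟨w ∘ e, fun i => (hwv (e i)).trans (he.extend_apply v 0 i).le, ?_⟩
  rw [tsum_extend_zero he] at hw
  refine (he.tsum_eq fun n hn => ?_).trans hw
  by_contra hne
  exact hn (le_antisymm ((hwv n).trans (by simp [Function.extend_apply' _ _ _ hne])) zero_le)

theorem ENNReal.div_le_rpow_div_rpow {p q : ℝ≥0∞} (hpq : p ≤ q) {a : ℝ} (ha0 : 0 ≤ a)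
    (ha1 : a ≤ 1) : p / q ≤ p ^ a / q ^ a := by
  rw [← ENNReal.div_rpow_of_nonneg _ _ ha0]
  simpa using
    ENNReal.rpow_le_rpow_of_exponent_ge (ENNReal.div_le_of_le_mul (by simpa using hpq)) ha1

def AgreeUpTo {I : Type*} (n : ℕ) (u z : ℕ → I) : Prop := ∀ s ≤ n, u s = z s

section Cylinders

variable {I : Type*} {n m a : ℕ} {u v z w x : ℕ → I}

theorem AgreeUpTo.refl (n : ℕ) (z : ℕ → I) : AgreeUpTo n z z := fun _ _ => rfl

theorem AgreeUpTo.symm (h : AgreeUpTo n u z) : AgreeUpTo n z u := fun s hs => (h s hs).symm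

theorem AgreeUpTo.trans (h : AgreeUpTo n u v) (h' : AgreeUpTo n v z) : AgreeUpTo n u z :=
  fun s hs => (h s hs).trans (h' s hs)

theorem AgreeUpTo.mono (h : AgreeUpTo n u z) (hmn : m ≤ n) : AgreeUpTo m u z :=
  fun s hs => h s (hs.trans hmn)

theorem agreeUpTo_update_self (hnm : n < m) (z : ℕ → I) (y : I) :
    AgreeUpTo n (Function.update z m y) z :=
  fun _ hs => Function.update_of_ne (by omega) _ _

theorem AgreeUpTo.of_update_succ {y : I} (h : AgreeUpTo (a + 1) u (Function.update z (a + 1) y)) :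
    AgreeUpTo a u z :=
  (h.mono a.le_succ).trans (agreeUpTo_update_self a.lt_succ_self z y)

theorem AgreeUpTo.update_succ (h : AgreeUpTo a u z) (y : I) :
    AgreeUpTo (a + 1) (Function.update u (a + 1) y) (Function.update z (a + 1) y) := by
  intro s hs
  rcases eq_or_ne s (a + 1) with rfl | hne
  · simp
  · rw [Function.update_of_ne hne, Function.update_of_ne hne]
    exact h s (by omega)

theorem AgreeUpTo.update_succ_self (h : AgreeUpTo a z w) :
    AgreeUpTo (a + 1) (Function.update z (a + 1) (w (a + 1))) w := by
  intro s hs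
  rcases eq_or_ne s (a + 1) with rfl | hne
  · simp
  · rw [Function.update_of_ne hne]
    exact h s (by omega)

theorem self_mem_cyl (n : ℕ) (z : ℕ → I) : z ∈ cyl n z := fun _ _ => rfl

theorem cyl_subset_cyl (hmn : m ≤ n) (h : AgreeUpTo m z w) : cyl n z ⊆ cyl m w :=
  fun _ hx s hs => (hx s (hs.trans hmn)).trans (h s hs)

theorem cyl_subset_cyl_iff (hmn : m ≤ n) : cyl n z ⊆ cyl m w ↔ AgreeUpTo m z w :=
  ⟨fun h s hs => h (self_mem_cyl n z) s hs, cyl_subset_cyl hmn⟩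

theorem cyl_eq_cyl_iff : cyl n z = cyl n w ↔ AgreeUpTo n z w :=
  ⟨fun h => (cyl_subset_cyl_iff le_rfl).1 h.le,
    fun h => (cyl_subset_cyl le_rfl h).antisymm (cyl_subset_cyl le_rfl h.symm)⟩

def overwrite (b : ℕ) (x z : ℕ → I) : ℕ → I := fun i => if i ≤ b then x i else z i

theorem agreeUpTo_overwrite (b : ℕ) (x z : ℕ → I) : AgreeUpTo b (overwrite b x z) x :=
  fun _ hs => if_pos hs

theorem overwrite_eq_self (h : AgreeUpTo n x z) : overwrite n x z = z := by
  funext i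
  unfold overwrite
  split_ifs with hi
  exacts [h i hi, rfl]

end Cylinders

section ExtensionSums

variable {I : Type*} {a b n : ℕ} {f g g₁ g₂ : (ℕ → I) → ℝ≥0∞} {u z w x : ℕ → I}

/-- The sum of `g` over all ways of changing the coordinates `a + 1, …, a + s` of `z`: for `g`
constant on cylinders of depth `a + s`, the sum over the children of `cyl a z` at that depth. -/
noncomputable def extSum (g : (ℕ → I) → ℝ≥0∞) : ℕ → ℕ → (ℕ → I) → ℝ≥0∞
  | 0, _, z => g z
  | s + 1, a, z => ∑' y : I, extSum g s (a + 1) (Function.update z (a + 1) y)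

theorem extSum_mono (s : ℕ) (h : ∀ u, AgreeUpTo a u z → g₁ u ≤ g₂ u) :
    extSum g₁ s a z ≤ extSum g₂ s a z := by
  induction s generalizing a z with
  | zero => exact h z (.refl a z)
  | succ s ih => exact ENNReal.tsum_le_tsum fun y => ih fun u hu => h u hu.of_update_succ

theorem extSum_congr (s : ℕ) (h : ∀ u, AgreeUpTo a u z → g₁ u = g₂ u) :
    extSum g₁ s a z = extSum g₂ s a z :=
  (extSum_mono s fun u hu => (h u hu).le).antisymm (extSum_mono s fun u hu => (h u hu).ge)

theorem extSum_eq_zero (s : ℕ) (h : ∀ u, AgreeUpTo a u z → g u = 0) : extSum g s a z = 0 := by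
  induction s generalizing a z with
  | zero => exact h z (.refl a z)
  | succ s ih => exact ENNReal.tsum_eq_zero.2 fun y => ih fun u hu => h u hu.of_update_succ

theorem extSum_tsum {ι : Type*} (G : ι → (ℕ → I) → ℝ≥0∞) (s a : ℕ) (z : ℕ → I) :
    extSum (fun u => ∑' i, G i u) s a z = ∑' i, extSum (G i) s a z := by
  induction s generalizing a z with
  | zero => rfl
  | succ s ih => simp only [extSum, ih]; exact ENNReal.tsum_comm

theorem extSum_mul_left (c : ℝ≥0∞) (g : (ℕ → I) → ℝ≥0∞) (s a : ℕ) (z : ℕ → I) :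
    extSum (fun u => c * g u) s a z = c * extSum g s a z := by
  induction s generalizing a z with
  | zero => rfl
  | succ s ih => simp only [extSum, ih]; exact ENNReal.tsum_mul_left

theorem extSum_add (g : (ℕ → I) → ℝ≥0∞) (s₁ s₂ a : ℕ) (z : ℕ → I) :
    extSum g (s₁ + s₂) a z = extSum (extSum g s₂ (a + s₁)) s₁ a z := by
  induction s₁ generalizing a z with
  | zero => rw [Nat.zero_add, Nat.add_zero]; rfl
  | succ s₁ ih =>
    rw [Nat.add_right_comm, extSum, extSum]
    refine tsum_congr fun y => ?_
    rw [ih, Nat.add_right_comm, Nat.add_assoc]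

theorem extSum_trans (g : (ℕ → I) → ℝ≥0∞) {a b c : ℕ} (hab : a ≤ b) (hbc : b ≤ c) (z : ℕ → I) :
    extSum g (c - a) a z = extSum (extSum g (c - b) b) (b - a) a z := by
  rw [show c - a = (b - a) + (c - b) by omega, extSum_add, Nat.add_sub_cancel' hab]

theorem exists_ne_zero_of_extSum_ne_zero (s : ℕ) (h : extSum g s a z ≠ 0) :
    ∃ u, AgreeUpTo a u z ∧ g u ≠ 0 := by
  by_contra! hg
  exact h (extSum_eq_zero s hg)

theorem le_extSum (s : ℕ) (hx : AgreeUpTo a x z) : g (overwrite (a + s) x z) ≤ extSum g s a z := by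
  induction s generalizing a z with
  | zero => exact (congrArg g (overwrite_eq_self hx)).le
  | succ s ih =>
    have hx' := hx.symm.update_succ_self.symm
    have hover : overwrite (a + (s + 1)) x z
        = overwrite (a + 1 + s) x (Function.update z (a + 1) (x (a + 1))) := by
      funext i
      unfold overwrite
      rcases eq_or_ne i (a + 1) with rfl | hne
      · simp
      · rw [Function.update_of_ne hne, Nat.add_right_comm, Nat.add_assoc]
    rw [hover]
    exact (ih hx').trans (ENNReal.le_tsum (f := fun y =>
      extSum g s (a + 1) (Function.update z (a + 1) y)) (x (a + 1)))

theorem extSum_le_one (s : ℕ) (hle : ∀ u, AgreeUpTo a u z → g u ≤ 1)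
    (huniq : ∀ u u', AgreeUpTo a u z → AgreeUpTo a u' z → g u ≠ 0 → g u' ≠ 0 →
      AgreeUpTo (a + s) u u') :
    extSum g s a z ≤ 1 := by
  induction s generalizing a z with
  | zero => exact hle z (.refl a z)
  | succ s ih =>
    have hterm : ∀ y : I, extSum g s (a + 1) (Function.update z (a + 1) y) ≤ 1 := fun y =>
      ih (fun u hu => hle u hu.of_update_succ) fun u u' hu hu' hgu hgu' =>
        (huniq u u' hu.of_update_succ hu'.of_update_succ hgu hgu').mono (by omega)
    by_cases hex : ∃ y₀, extSum g s (a + 1) (Function.update z (a + 1) y₀) ≠ 0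
    · obtain ⟨y₀, hy₀⟩ := hex
      refine (tsum_eq_single y₀ fun y hy => ?_).le.trans (hterm y₀)
      by_contra hne
      obtain ⟨u, hu, hgu⟩ := exists_ne_zero_of_extSum_ne_zero s hne
      obtain ⟨u', hu', hgu'⟩ := exists_ne_zero_of_extSum_ne_zero s hy₀
      have huu' := huniq u u' hu.of_update_succ hu'.of_update_succ hgu hgu' (a + 1) (by omega)
      rw [hu (a + 1) le_rfl, hu' (a + 1) le_rfl] at huu'
      simp at huu'
      exact hy huu'
    · push Not at hex
      exact (ENNReal.tsum_eq_zero.2 hex).le.trans zero_le_one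

theorem extSum_eq_of_support_subset_cyl (hf : ∀ u, f u ≠ 0 → AgreeUpTo b u w) (s₂ : ℕ)
    (hz : AgreeUpTo a z w) {s₁ : ℕ} (hb : a + s₁ = b) :
    extSum f (s₁ + s₂) a z = extSum f s₂ b (overwrite b w z) := by
  induction s₁ generalizing a z with
  | zero =>
    subst hb
    rw [Nat.zero_add, Nat.add_zero, overwrite_eq_self hz.symm]
  | succ s₁ ih =>
    rw [Nat.add_right_comm, extSum]
    rw [tsum_eq_single (w (a + 1)) fun y hy => extSum_eq_zero _ fun u hu => ?_,
      ih hz.update_succ_self (by omega)]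
    · congr 1
      funext i
      unfold overwrite
      split_ifs with hi
      · rfl
      · rw [Function.update_of_ne (by omega)]
    · by_contra hfu
      have := (hu (a + 1) le_rfl).symm.trans (hf u hfu (a + 1) (by omega))
      simp [hy] at this

theorem extSum_indicator_cyl_le (han : a ≤ n) (hnb : n ≤ b) (z w : ℕ → I) :
    ∃ z', cyl n z' = cyl n w ∧
      extSum ((cyl n w).indicator f) (b - a) a z ≤ extSum f (b - n) n z' := by
  have hf : ∀ u, (cyl n w).indicator f u ≠ 0 → AgreeUpTo n u w := fun u hu =>
    Set.mem_of_indicator_ne_zero hu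
  by_cases hz : AgreeUpTo a z w
  · refine ⟨overwrite n w z, cyl_eq_cyl_iff.2 (agreeUpTo_overwrite n w z), le_of_eq ?_⟩
    rw [show b - a = (n - a) + (b - n) by omega,
      extSum_eq_of_support_subset_cyl hf _ hz (by omega)]
    refine extSum_congr _ fun u hu => Set.indicator_of_mem ?_ f
    exact hu.trans (agreeUpTo_overwrite n w z)
  · refine ⟨w, rfl, le_of_eq_of_le ?_ zero_le⟩
    refine extSum_eq_zero _ fun u hu => ?_
    by_contra hne
    exact hz (hu.symm.trans ((hf u hne).mono han))

end ExtensionSums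

section Split

variable {I : Type*} [Countable I]

noncomputable def split (v : I → ℝ≥0∞) (c : ℝ≥0∞) : I → ℝ≥0∞ :=
  (ENNReal.exists_le_tsum_eq_min v c).choose

theorem split_le (v : I → ℝ≥0∞) (c : ℝ≥0∞) : split v c ≤ v :=
  (ENNReal.exists_le_tsum_eq_min v c).choose_spec.1

theorem tsum_split (v : I → ℝ≥0∞) (c : ℝ≥0∞) : ∑' y, split v c y = min c (∑' y, v y) :=
  (ENNReal.exists_le_tsum_eq_min v c).choose_spec.2

end Split

section Flow

variable {I : Type*} [MeasurableSpace I] (μ : Measure (ℕ → I)) (t : ℕ) (𝒥 : Set (Set (ℕ → I)))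

open Classical in
/-- `capacity μ t 𝒥 s z` is the most mass that can sit on `cyl (t - s) z` and be passed down to the
cylinders of `𝒥` of depth `t` below it without any intermediate cylinder receiving more than its
`μ`-measure. -/
noncomputable def capacity : ℕ → (ℕ → I) → ℝ≥0∞
  | 0, z => if cyl t z ∈ 𝒥 then μ (cyl t z) else 0
  | s + 1, z => min (μ (cyl (t - (s + 1)) z)) (∑' y : I, capacity s (Function.update z (t - s) y))

variable {μ t 𝒥}

theorem capacity_le_measure {s r : ℕ} (z : ℕ → I) (hr : r + s = t) :
    capacity μ t 𝒥 s z ≤ μ (cyl r z) := by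
  cases s with
  | zero =>
    obtain rfl : r = t := by omega
    unfold capacity
    split_ifs
    exacts [le_rfl, zero_le]
  | succ s =>
    rw [capacity, show t - (s + 1) = r by omega]
    exact min_le_left _ _

theorem capacity_congr {s r : ℕ} {z z' : ℕ → I} (hr : r + s = t) (h : AgreeUpTo r z z') :
    capacity μ t 𝒥 s z = capacity μ t 𝒥 s z' := by
  induction s generalizing r z z' with
  | zero =>
    obtain rfl : r = t := by omega
    rw [capacity, capacity, cyl_eq_cyl_iff.2 h]
  | succ s ih =>
    rw [capacity, capacity, show t - (s + 1) = r by omega, show t - s = r + 1 by omega,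
      cyl_eq_cyl_iff.2 h]
    congr 1
    exact tsum_congr fun y => ih (by omega) (h.update_succ y)

theorem measure_sUnion_le_capacity [Countable I] (h𝒥 : ∀ T ∈ 𝒥, ∃ w, T = cyl t w) {s r : ℕ}
    (z : ℕ → I) (hr : r + s = t) :
    μ (⋃₀ {T | T ∈ 𝒥 ∧ T ⊆ cyl r z}) ≤ capacity μ t 𝒥 s z := by
  have hsub : ⋃₀ {T | T ∈ 𝒥 ∧ T ⊆ cyl r z} ⊆ cyl r z := Set.sUnion_subset fun T hT => hT.2
  induction s generalizing r z with
  | zero =>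
    obtain rfl : r = t := by omega
    rw [capacity]
    split_ifs with hz
    · exact measure_mono hsub
    · refine (measure_mono (Set.sUnion_subset fun T hT => ?_)).trans (measure_empty (μ := μ)).le
      obtain ⟨w, rfl⟩ := h𝒥 T hT.1
      rw [cyl_eq_cyl_iff.2 ((cyl_subset_cyl_iff le_rfl).1 hT.2)] at hT
      exact absurd hT.1 hz
  | succ s ih =>
    rw [capacity, show t - (s + 1) = r by omega, show t - s = r + 1 by omega]
    refine le_min (measure_mono hsub) ?_
    have hcover : ⋃₀ {T | T ∈ 𝒥 ∧ T ⊆ cyl r z}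
        ⊆ ⋃ y : I, ⋃₀ {T | T ∈ 𝒥 ∧ T ⊆ cyl (r + 1) (Function.update z (r + 1) y)} := by
      rintro x ⟨T, ⟨hT𝒥, hTz⟩, hx⟩
      obtain ⟨w, rfl⟩ := h𝒥 T hT𝒥
      have hwz : AgreeUpTo r w z := (cyl_subset_cyl_iff (by omega)).1 hTz
      refine Set.mem_iUnion.2 ⟨w (r + 1), cyl t w, ⟨hT𝒥, cyl_subset_cyl (by omega) ?_⟩, hx⟩
      simpa using hwz.update_succ (w (r + 1))
    exact (measure_mono hcover).trans ((measure_iUnion_le _).trans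
      (ENNReal.tsum_le_tsum fun y => ih _ (by omega) (Set.sUnion_subset fun T hT => hT.2)))

variable [Countable I]

variable (μ t 𝒥) in
/-- The capacity of `cyl b z`, passed down one coordinate at a time: `flow μ t 𝒥 b s` lives on
cylinders of depth `b + s`. -/
noncomputable def flow (b : ℕ) : ℕ → (ℕ → I) → ℝ≥0∞
  | 0, z => capacity μ t 𝒥 (t - b) z
  | s + 1, z => split (fun y => capacity μ t 𝒥 (t - (b + s + 1)) (Function.update z (b + s + 1) y))
      (flow b s z) (z (b + s + 1))

theorem flow_le_capacity {b : ℕ} (s : ℕ) (z : ℕ → I) :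
    flow μ t 𝒥 b s z ≤ capacity μ t 𝒥 (t - (b + s)) z := by
  cases s with
  | zero => exact le_rfl
  | succ s =>
    refine (split_le _ _ _).trans ?_
    rw [Function.update_eq_self, ← Nat.add_assoc]

theorem flow_le_measure {b s : ℕ} (hs : b + s ≤ t) (z : ℕ → I) :
    flow μ t 𝒥 b s z ≤ μ (cyl (b + s) z) :=
  (flow_le_capacity s z).trans (capacity_le_measure z (by omega))

theorem flow_eq_zero_of_not_mem {b : ℕ} (hbt : b ≤ t) {z : ℕ → I} (hz : cyl t z ∉ 𝒥) :
    flow μ t 𝒥 b (t - b) z = 0 := by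
  refine le_antisymm ((flow_le_capacity _ z).trans ?_) zero_le
  rw [show t - (b + (t - b)) = 0 by omega, capacity, if_neg hz]

theorem flow_congr {b s : ℕ} {z z' : ℕ → I} (hs : b + s ≤ t)
    (h : AgreeUpTo (b + s) z z') : flow μ t 𝒥 b s z = flow μ t 𝒥 b s z' := by
  induction s generalizing z z' with
  | zero => exact capacity_congr (by omega) h
  | succ s ih =>
    have hcap : ∀ y, capacity μ t 𝒥 (t - (b + s + 1)) (Function.update z (b + s + 1) y)
        = capacity μ t 𝒥 (t - (b + s + 1)) (Function.update z' (b + s + 1) y) := fun y =>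
      capacity_congr (by omega) ((h.mono (by omega)).update_succ y)
    simp only [flow, funext hcap, ih (by omega) (h.mono (by omega)), h (b + s + 1) le_rfl]

theorem tsum_flow_update {b s : ℕ} (z : ℕ → I) (hs : b + s + 1 ≤ t) :
    ∑' y : I, flow μ t 𝒥 b (s + 1) (Function.update z (b + s + 1) y) = flow μ t 𝒥 b s z := by
  have hterm : ∀ y, flow μ t 𝒥 b (s + 1) (Function.update z (b + s + 1) y)
      = split (fun y' => capacity μ t 𝒥 (t - (b + s + 1)) (Function.update z (b + s + 1) y'))
          (flow μ t 𝒥 b s z) y := by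
    intro y
    simp only [flow, Function.update_self, Function.update_idem]
    rw [flow_congr (by omega) (agreeUpTo_update_self (by omega) z y)]
  rw [tsum_congr hterm, tsum_split, min_eq_left]
  refine (flow_le_capacity s z).trans ?_
  rw [show t - (b + s) = t - (b + s + 1) + 1 by omega, capacity,
    show t - (t - (b + s + 1)) = b + s + 1 by omega]
  exact min_le_right _ _

theorem extSum_flow {b n : ℕ} (hbn : b ≤ n) (hnt : n ≤ t) (z : ℕ → I) :
    extSum (flow μ t 𝒥 b (t - b)) (t - n) n z = flow μ t 𝒥 b (n - b) z := by
  induction h : t - n generalizing n z with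
  | zero =>
    obtain rfl : n = t := by omega
    rfl
  | succ s' ih =>
    have key := tsum_flow_update (μ := μ) (t := t) (𝒥 := 𝒥) (b := b) (s := n - b) z (by omega)
    rw [show b + (n - b) = n by omega] at key
    rw [extSum, ← key]
    refine tsum_congr fun y => ?_
    rw [ih (by omega) (by omega) _ (by omega), show n + 1 - b = n - b + 1 by omega]

end Flow

structure IsPatternTree {I : Type*} (d dt : ℕ → ℕ) (J Jt : ℕ → Set (Set (ℕ → I))) : Prop where
  depth_lt : ∀ j, d j < dt (j + 1)
  depth_le : ∀ j, dt (j + 1) ≤ d (j + 1)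
  isCyl_J : ∀ j, ∀ S ∈ J j, ∃ z, S = cyl (d j) z
  isCyl_Jt : ∀ j, ∀ S ∈ Jt j, ∃ z, S = cyl (dt j) z
  subset_Jt : ∀ j, ∀ S ∈ J (j + 1), ∃ St ∈ Jt (j + 1), S ⊆ St
  subset_J : ∀ j, ∀ St ∈ Jt (j + 1), ∃ Sp ∈ J j, St ⊆ Sp
  existsUnique_J : ∀ j, ∀ St ∈ Jt (j + 1), ∃! S, S ∈ J (j + 1) ∧ S ⊆ St

/-- Depth of the `k`-th generation of the tree `J 0, Jt 1, J 1, Jt 2, …`. -/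
def level (d dt : ℕ → ℕ) (k : ℕ) : ℕ := if k % 2 = 0 then d (k / 2) else dt (k / 2 + 1)

theorem level_two_mul (d dt : ℕ → ℕ) (j : ℕ) : level d dt (2 * j) = d j := by
  simp [level]

theorem level_two_mul_add_one (d dt : ℕ → ℕ) (j : ℕ) : level d dt (2 * j + 1) = dt (j + 1) := by
  simp [level, Nat.add_mod, Nat.add_div]

namespace IsPatternTree

variable {I : Type*} {d dt : ℕ → ℕ} {J Jt : ℕ → Set (Set (ℕ → I))} (T : IsPatternTree d dt J Jt)
include T

theorem strictMono : StrictMono d :=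
  strictMono_nat_of_lt_succ fun j => (T.depth_lt j).trans_le (T.depth_le j)

theorem monotone_level : Monotone (level d dt) := by
  refine monotone_nat_of_le_succ fun k => ?_
  obtain ⟨j, rfl | rfl⟩ := Nat.even_or_odd' k
  · rw [level_two_mul, level_two_mul_add_one]
    exact (T.depth_lt j).le
  · rw [level_two_mul_add_one, show 2 * j + 1 + 1 = 2 * (j + 1) by ring, level_two_mul]
    exact T.depth_le j

theorem exists_le_level (n : ℕ) : ∃ k, n ≤ level d dt k :=
  ⟨2 * n, by rw [level_two_mul]; exact T.strictMono.le_apply⟩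

theorem mem_Jt {j : ℕ} {w : ℕ → I} (hw : cyl (d (j + 1)) w ∈ J (j + 1)) :
    cyl (dt (j + 1)) w ∈ Jt (j + 1) := by
  obtain ⟨St, hSt, hsub⟩ := T.subset_Jt j _ hw
  obtain ⟨z, rfl⟩ := T.isCyl_Jt _ St hSt
  rwa [cyl_eq_cyl_iff.2 ((cyl_subset_cyl_iff (T.depth_le j)).1 hsub)]

theorem mem_J {j : ℕ} {w : ℕ → I} (hw : cyl (dt (j + 1)) w ∈ Jt (j + 1)) : cyl (d j) w ∈ J j := by
  obtain ⟨Sp, hSp, hsub⟩ := T.subset_J j _ hw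
  obtain ⟨z, rfl⟩ := T.isCyl_J _ Sp hSp
  rwa [cyl_eq_cyl_iff.2 ((cyl_subset_cyl_iff (T.depth_lt j).le).1 hsub)]

theorem exists_child {j : ℕ} {w : ℕ → I} (hw : cyl (dt (j + 1)) w ∈ Jt (j + 1)) :
    ∃ u, AgreeUpTo (dt (j + 1)) u w ∧ cyl (d (j + 1)) u ∈ J (j + 1) := by
  obtain ⟨S, ⟨hSJ, hSsub⟩, -⟩ := T.existsUnique_J j _ hw
  obtain ⟨u, rfl⟩ := T.isCyl_J _ S hSJ
  exact ⟨u, (cyl_subset_cyl_iff (T.depth_le j)).1 hSsub, hSJ⟩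

theorem agreeUpTo_of_mem_J {j : ℕ} {w u u' : ℕ → I} (hw : cyl (dt (j + 1)) w ∈ Jt (j + 1))
    (hu : AgreeUpTo (dt (j + 1)) u w) (hu' : AgreeUpTo (dt (j + 1)) u' w)
    (huJ : cyl (d (j + 1)) u ∈ J (j + 1)) (huJ' : cyl (d (j + 1)) u' ∈ J (j + 1)) :
    AgreeUpTo (d (j + 1)) u u' := by
  obtain ⟨S, -, hS⟩ := T.existsUnique_J j _ hw
  refine cyl_eq_cyl_iff.1 ((hS _ ⟨huJ, cyl_subset_cyl (T.depth_le j) hu⟩).trans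
    (hS _ ⟨huJ', cyl_subset_cyl (T.depth_le j) hu'⟩).symm)

open scoped Classical in
theorem extSum_indicator_J_le_one {j n : ℕ} (hn : dt (j + 1) ≤ n) (hn' : n ≤ d (j + 1))
    {z : ℕ → I} (hz : cyl (dt (j + 1)) z ∈ Jt (j + 1)) :
    extSum (fun u => if cyl (d (j + 1)) u ∈ J (j + 1) then 1 else 0) (d (j + 1) - n) n z ≤ 1 := by
  refine extSum_le_one _ (fun u _ => by split_ifs <;> simp) fun u u' hu hu' hne hne' => ?_
  rw [show n + (d (j + 1) - n) = d (j + 1) by omega]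
  exact T.agreeUpTo_of_mem_J hz (hu.mono hn) (hu'.mono hn) (by simpa using hne)
    (by simpa using hne')

end IsPatternTree

section Mass

open scoped Classical

variable {I : Type*} [Countable I] [MeasurableSpace I] (μ : Measure (ℕ → I)) (d dt : ℕ → ℕ)
  (J Jt : ℕ → Set (Set (ℕ → I)))

/-- Generation `2 * j + 1` receives the mass of generation `2 * j` in proportion to the flow;
generation `2 * j + 2` keeps it on the cylinders of `J (j + 1)`. -/
noncomputable def mass : ℕ → (ℕ → I) → ℝ≥0∞
  | 0, z => if cyl (d 0) z ∈ J 0 then 1 else 0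
  | k + 1, z =>
    if k % 2 = 0 then
      mass k z * flow μ (dt (k / 2 + 1)) (Jt (k / 2 + 1)) (d (k / 2)) (dt (k / 2 + 1) - d (k / 2)) z
        / capacity μ (dt (k / 2 + 1)) (Jt (k / 2 + 1)) (dt (k / 2 + 1) - d (k / 2)) z
    else if cyl (d ((k + 1) / 2)) z ∈ J ((k + 1) / 2) then mass k z else 0

theorem mass_zero (z : ℕ → I) : mass μ d dt J Jt 0 z = if cyl (d 0) z ∈ J 0 then 1 else 0 := by
  rw [mass]

theorem mass_two_mul_add_one (j : ℕ) (z : ℕ → I) :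
    mass μ d dt J Jt (2 * j + 1) z = mass μ d dt J Jt (2 * j) z
      * flow μ (dt (j + 1)) (Jt (j + 1)) (d j) (dt (j + 1) - d j) z
      / capacity μ (dt (j + 1)) (Jt (j + 1)) (dt (j + 1) - d j) z := by
  simp [mass]

theorem mass_two_mul_add_two (j : ℕ) (z : ℕ → I) :
    mass μ d dt J Jt (2 * j + 2) z
      = if cyl (d (j + 1)) z ∈ J (j + 1) then mass μ d dt J Jt (2 * j + 1) z else 0 := by
  rw [mass, if_neg (by omega), show (2 * j + 1 + 1) / 2 = j + 1 by omega]

variable {μ d dt J Jt}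

theorem mem_J_of_mass_ne_zero {j : ℕ} {z : ℕ → I} (h : mass μ d dt J Jt (2 * j) z ≠ 0) :
    cyl (d j) z ∈ J j := by
  by_contra hz
  cases j with
  | zero => simp [mass_zero, hz] at h
  | succ j => simp [show 2 * (j + 1) = 2 * j + 2 by ring, mass_two_mul_add_two, hz] at h

variable (T : IsPatternTree d dt J Jt)
include T

theorem mass_congr {k : ℕ} {z z' : ℕ → I} (h : AgreeUpTo (level d dt k) z z') :
    mass μ d dt J Jt k z = mass μ d dt J Jt k z' := by
  induction k generalizing z z' with
  | zero => rw [mass_zero, mass_zero, cyl_eq_cyl_iff.2 (by simpa [level] using h)]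
  | succ k ih =>
    have hk := h.mono (T.monotone_level k.le_succ)
    obtain ⟨j, rfl | rfl⟩ := Nat.even_or_odd' k
    · rw [level_two_mul_add_one] at h
      rw [mass_two_mul_add_one, mass_two_mul_add_one, ih hk,
        flow_congr (by have := T.depth_lt j; omega)
          (h.mono (by have := T.depth_lt j; omega)),
        capacity_congr (by have := T.depth_lt j; omega) (h.mono (T.depth_lt j).le)]
    · rw [show 2 * j + 1 + 1 = 2 * (j + 1) by ring, level_two_mul] at h
      rw [mass_two_mul_add_two, mass_two_mul_add_two, ih hk, cyl_eq_cyl_iff.2 h]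

theorem mem_Jt_of_mass_ne_zero {j : ℕ} {z : ℕ → I} (h : mass μ d dt J Jt (2 * j + 1) z ≠ 0) :
    cyl (dt (j + 1)) z ∈ Jt (j + 1) := by
  by_contra hz
  simp [mass_two_mul_add_one, flow_eq_zero_of_not_mem (T.depth_lt j).le hz] at h

theorem extSum_mass_two_mul_add_one {j n : ℕ} (hn : d j ≤ n) (hn' : n ≤ dt (j + 1))
    (z : ℕ → I) :
    extSum (mass μ d dt J Jt (2 * j + 1)) (dt (j + 1) - n) n z
      = mass μ d dt J Jt (2 * j) z / capacity μ (dt (j + 1)) (Jt (j + 1)) (dt (j + 1) - d j) z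
        * flow μ (dt (j + 1)) (Jt (j + 1)) (d j) (n - d j) z := by
  rw [← extSum_flow hn hn', ← extSum_mul_left]
  refine extSum_congr _ fun u hu => ?_
  rw [mass_two_mul_add_one, mass_congr T ((level_two_mul d dt j).symm ▸ hu.mono hn),
    capacity_congr (by omega) (hu.mono hn), div_eq_mul_inv, div_eq_mul_inv, mul_right_comm]

theorem extSum_mass_two_mul_add_two {j n : ℕ} (hn : dt (j + 1) ≤ n) (z : ℕ → I) :
    extSum (mass μ d dt J Jt (2 * j + 2)) (d (j + 1) - n) n z
      = mass μ d dt J Jt (2 * j + 1) z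
        * extSum (fun u => if cyl (d (j + 1)) u ∈ J (j + 1) then 1 else 0) (d (j + 1) - n) n z := by
  rw [← extSum_mul_left]
  refine extSum_congr _ fun u hu => ?_
  rw [mass_two_mul_add_two,
    mass_congr T ((level_two_mul_add_one d dt j).symm ▸ hu.mono hn)]
  split_ifs <;> simp

theorem mass_le_extSum_mass [IsFiniteMeasure μ]
    (hcap : ∀ j z, cyl (d j) z ∈ J j →
      capacity μ (dt (j + 1)) (Jt (j + 1)) (dt (j + 1) - d j) z ≠ 0)
    (k : ℕ) (z : ℕ → I) :
    mass μ d dt J Jt k z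
      ≤ extSum (mass μ d dt J Jt (k + 1)) (level d dt (k + 1) - level d dt k) (level d dt k) z := by
  obtain ⟨j, rfl | rfl⟩ := Nat.even_or_odd' k
  · rw [level_two_mul_add_one, level_two_mul, extSum_mass_two_mul_add_one T le_rfl
      (T.depth_lt j).le, Nat.sub_self]
    by_cases hm : mass μ d dt J Jt (2 * j) z = 0
    · simp [hm]
    have hcap0 := hcap j z (mem_J_of_mass_ne_zero hm)
    have hcaptop : capacity μ (dt (j + 1)) (Jt (j + 1)) (dt (j + 1) - d j) z ≠ ⊤ :=
      ne_top_of_le_ne_top (measure_ne_top μ _)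
        (capacity_le_measure (r := d j) z (by have := T.depth_lt j; omega))
    exact (ENNReal.div_mul_cancel hcap0 hcaptop).ge
  · rw [level_two_mul_add_one, show 2 * j + 1 + 1 = 2 * j + 2 by ring,
      show level d dt (2 * j + 2) = d (j + 1) from level_two_mul d dt (j + 1),
      extSum_mass_two_mul_add_two T le_rfl]
    by_cases hm : mass μ d dt J Jt (2 * j + 1) z = 0
    · simp [hm]
    obtain ⟨u, hu, huJ⟩ := T.exists_child (mem_Jt_of_mass_ne_zero T hm)
    refine le_mul_of_one_le_right zero_le ((le_extSum _ hu).trans_eq' ?_)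
    rw [Nat.add_sub_cancel' (T.depth_le j), if_pos]
    rwa [cyl_eq_cyl_iff.2 (agreeUpTo_overwrite _ u z)]

end Mass

structure PatternMassBounds {I : Type*} [MeasurableSpace I] (μ : Measure (ℕ → I))
    (J Jt : ℕ → Set (Set (ℕ → I))) (αs βs γs δs : ℕ → ℝ) : Prop where
  delta_pos : ∀ j, 0 < δs j
  delta_le_one : ∀ j, δs j ≤ 1
  ratio_Jt : ∀ j, ∀ St ∈ Jt (j + 1), ∀ Sp ∈ J j, St ⊆ Sp →
    ENNReal.ofReal (Real.exp (-(αs (j + 1)))) * μ Sp ≤ μ St ∧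
    μ St ≤ ENNReal.ofReal (Real.exp (-(βs (j + 1)))) * μ Sp
  ratio_J : ∀ j, ∀ S ∈ J (j + 1), ∀ St ∈ Jt (j + 1), S ⊆ St →
    ENNReal.ofReal (Real.exp (-(γs (j + 1)))) * μ St ≤ μ S
  abundance : ∀ j, ∀ Sp ∈ J j,
    ENNReal.ofReal (δs (j + 1)) * μ Sp ≤ μ (⋃₀ {St | St ∈ Jt (j + 1) ∧ St ⊆ Sp})

noncomputable def massBound (βs δs : ℕ → ℝ) (j : ℕ) : ℝ :=
  Real.exp (-∑ i ∈ Icc 1 j, βs i) / ∏ i ∈ Icc 1 j, δs i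

theorem massBound_nonneg (βs : ℕ → ℝ) {δs : ℕ → ℝ} (hδ : ∀ j, 0 ≤ δs j) (j : ℕ) :
    0 ≤ massBound βs δs j :=
  div_nonneg (Real.exp_pos _).le (prod_nonneg fun i _ => hδ i)

theorem massBound_zero (βs δs : ℕ → ℝ) : massBound βs δs 0 = 1 := by
  simp [massBound]

theorem massBound_succ (βs δs : ℕ → ℝ) (j : ℕ) :
    massBound βs δs (j + 1) = massBound βs δs j * Real.exp (-βs (j + 1)) / δs (j + 1) := by
  rw [massBound, massBound, sum_Icc_succ_top (by omega), prod_Icc_succ_top (by omega), neg_add,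
    Real.exp_add]
  ring

namespace PatternMassBounds

variable {I : Type*} [MeasurableSpace I] {μ : Measure (ℕ → I)} {d dt : ℕ → ℕ}
  {J Jt : ℕ → Set (Set (ℕ → I))} {αs βs γs δs : ℕ → ℝ} (B : PatternMassBounds μ J Jt αs βs γs δs)
  (T : IsPatternTree d dt J Jt)
include B T

theorem ofReal_exp_mul_le_measure {ρ : ℝ≥0∞} (h0 : ∀ S ∈ J 0, ρ ≤ μ S) (j : ℕ) {w : ℕ → I}
    (hw : cyl (d j) w ∈ J j) :
    ENNReal.ofReal (Real.exp (-(∑ i ∈ Icc 1 j, αs i + ∑ i ∈ Icc 1 j, γs i))) * ρ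
      ≤ μ (cyl (d j) w) := by
  induction j generalizing w with
  | zero => simpa using h0 _ hw
  | succ j ih =>
    have hSt := T.mem_Jt hw
    have hSp := T.mem_J hSt
    calc ENNReal.ofReal (Real.exp (-(∑ i ∈ Icc 1 (j + 1), αs i + ∑ i ∈ Icc 1 (j + 1), γs i))) * ρ
        = ENNReal.ofReal (Real.exp (-γs (j + 1))) * (ENNReal.ofReal (Real.exp (-αs (j + 1)))
          * (ENNReal.ofReal (Real.exp (-(∑ i ∈ Icc 1 j, αs i + ∑ i ∈ Icc 1 j, γs i))) * ρ)) := by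
          rw [← mul_assoc, ← mul_assoc, ← ENNReal.ofReal_mul (Real.exp_pos _).le,
            ← ENNReal.ofReal_mul (by positivity), ← Real.exp_add, ← Real.exp_add,
            sum_Icc_succ_top (by omega), sum_Icc_succ_top (by omega)]
          ring_nf
      _ ≤ ENNReal.ofReal (Real.exp (-γs (j + 1)))
          * (ENNReal.ofReal (Real.exp (-αs (j + 1))) * μ (cyl (d j) w)) := by gcongr; exact ih hSp
      _ ≤ ENNReal.ofReal (Real.exp (-γs (j + 1))) * μ (cyl (dt (j + 1)) w) := by
          gcongr
          exact (B.ratio_Jt j _ hSt _ hSp (cyl_subset_cyl (T.depth_lt j).le (.refl _ _))).1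
      _ ≤ μ (cyl (d (j + 1)) w) :=
          B.ratio_J j _ hw _ hSt (cyl_subset_cyl (T.depth_le j) (.refl _ _))

theorem ofReal_mul_measure_le_capacity [Countable I] {j : ℕ} {z : ℕ → I}
    (hz : cyl (d j) z ∈ J j) :
    ENNReal.ofReal (δs (j + 1)) * μ (cyl (d j) z)
      ≤ capacity μ (dt (j + 1)) (Jt (j + 1)) (dt (j + 1) - d j) z :=
  (B.abundance j _ hz).trans (measure_sUnion_le_capacity (T.isCyl_Jt (j + 1)) z
    (by have := T.depth_lt j; omega))

theorem capacity_ne_zero [Countable I] {ρ : ℝ≥0∞} (h0 : ∀ S ∈ J 0, ρ ≤ μ S) (hρ : ρ ≠ 0)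
    {j : ℕ} {z : ℕ → I} (hz : cyl (d j) z ∈ J j) :
    capacity μ (dt (j + 1)) (Jt (j + 1)) (dt (j + 1) - d j) z ≠ 0 := by
  refine (lt_of_lt_of_le ?_ (B.ofReal_mul_measure_le_capacity T hz)).ne'
  refine ENNReal.mul_pos (by simpa using B.delta_pos (j + 1)) ?_
  refine (lt_of_lt_of_le ?_ (B.ofReal_exp_mul_le_measure T h0 j hz)).ne'
  exact ENNReal.mul_pos (by simpa using Real.exp_pos _) hρ

theorem flow_div_capacity_le [Countable I] [IsFiniteMeasure μ] {j : ℕ} {z : ℕ → I}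
    (hz : cyl (d j) z ∈ J j) :
    flow μ (dt (j + 1)) (Jt (j + 1)) (d j) (dt (j + 1) - d j) z
        / capacity μ (dt (j + 1)) (Jt (j + 1)) (dt (j + 1) - d j) z
      ≤ ENNReal.ofReal (Real.exp (-βs (j + 1))) / ENNReal.ofReal (δs (j + 1)) := by
  have hdt : d j + (dt (j + 1) - d j) = dt (j + 1) := by have := T.depth_lt j; omega
  by_cases hSt : cyl (dt (j + 1)) z ∈ Jt (j + 1)
  swap
  · simp [flow_eq_zero_of_not_mem (T.depth_lt j).le hSt]
  have hflow : flow μ (dt (j + 1)) (Jt (j + 1)) (d j) (dt (j + 1) - d j) z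
      ≤ ENNReal.ofReal (Real.exp (-βs (j + 1))) * μ (cyl (d j) z) :=
    (hdt ▸ flow_le_measure hdt.le z).trans
      (B.ratio_Jt j _ hSt _ hz (cyl_subset_cyl (T.depth_lt j).le (.refl _ _))).2
  by_cases hN : μ (cyl (d j) z) = 0
  · simp [le_antisymm (hflow.trans_eq (by simp [hN])) zero_le]
  calc _ ≤ ENNReal.ofReal (Real.exp (-βs (j + 1))) * μ (cyl (d j) z)
        / (ENNReal.ofReal (δs (j + 1)) * μ (cyl (d j) z)) :=
        ENNReal.div_le_div hflow (B.ofReal_mul_measure_le_capacity T hz)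
    _ = _ := ENNReal.mul_div_mul_right _ _ hN (measure_ne_top μ _)

theorem mass_two_mul_add_one_le [Countable I] [IsFiniteMeasure μ] {j : ℕ}
    (h : ∀ z, mass μ d dt J Jt (2 * j) z ≤ ENNReal.ofReal (massBound βs δs j)) (z : ℕ → I) :
    mass μ d dt J Jt (2 * j + 1) z ≤ ENNReal.ofReal (massBound βs δs (j + 1)) := by
  by_cases hm : mass μ d dt J Jt (2 * j) z = 0
  · simp [mass_two_mul_add_one, hm]
  have hδ := B.delta_pos (j + 1)
  rw [mass_two_mul_add_one, mul_div_assoc, massBound_succ, ENNReal.ofReal_div_of_pos hδ,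
    ENNReal.ofReal_mul (massBound_nonneg βs (fun i => (B.delta_pos i).le) j), mul_div_assoc]
  exact mul_le_mul' (h z) (B.flow_div_capacity_le T (mem_J_of_mass_ne_zero hm))

theorem mass_two_mul_le [Countable I] [IsFiniteMeasure μ] (j : ℕ) (z : ℕ → I) :
    mass μ d dt J Jt (2 * j) z ≤ ENNReal.ofReal (massBound βs δs j) := by
  induction j generalizing z with
  | zero =>
    rw [massBound_zero, ENNReal.ofReal_one, Nat.mul_zero, mass_zero]
    split_ifs <;> simp
  | succ j ih =>
    rw [show 2 * (j + 1) = 2 * j + 2 by ring, mass_two_mul_add_two]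
    split_ifs
    exacts [B.mass_two_mul_add_one_le T ih z, zero_le]

end PatternMassBounds

section MassDistribution

theorem exists_seq_of_forall_exists {α : Type*} {P : ℕ → α → Prop} {R : ℕ → α → α → Prop}
    {a : α} (h0 : P 0 a) (h : ∀ k x, P k x → ∃ y, R k x y ∧ P (k + 1) y) :
    ∃ f : ℕ → α, f 0 = a ∧ ∀ k, P k (f k) ∧ R k (f k) (f (k + 1)) := by
  choose! g hg using h
  let f : ℕ → α := fun k => Nat.rec a (fun k x => g k x) k
  have hP : ∀ k, P k (f k) := fun k => by
    induction k with
    | zero => exact h0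
    | succ k ih => exact (hg k _ ih).2
  exact ⟨f, rfl, fun k => ⟨hP k, (hg k _ (hP k)).1⟩⟩

variable {I : Type*} {L : ℕ → ℕ}

theorem exists_forall_agreeUpTo (hL : Monotone L) (hLub : ∀ n, ∃ k, n ≤ L k) {zs : ℕ → ℕ → I}
    (h : ∀ k, AgreeUpTo (L k) (zs (k + 1)) (zs k)) : ∃ x, ∀ k, AgreeUpTo (L k) x (zs k) := by
  have hchain : ∀ k k', k ≤ k' → AgreeUpTo (L k) (zs k') (zs k) := by
    intro k k' hkk'
    induction k', hkk' using Nat.le_induction with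
    | base => exact .refl _ _
    | succ k' hkk' ih => exact ((h k').mono (hL hkk')).trans ih
  refine ⟨fun n => zs (Nat.find (hLub n)) n, fun k s hs => ?_⟩
  rcases le_total (Nat.find (hLub s)) k with hle | hle
  · exact (hchain _ k hle s (Nat.find_spec (hLub s))).symm
  · exact hchain k _ hle s hs

/-- The mass distribution principle, for masses `m k` on the cylinders of depth `L k` that are
superadditive along the tree. If a cover took less than the root mass, the children it never
exhausts would form a branch converging to a point of `E` outside the cover. -/
theorem mass_le_tsum_extSum_indicator (hL : Monotone L) (hLub : ∀ n, ∃ k, n ≤ L k)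
    {m : ℕ → (ℕ → I) → ℝ≥0∞} (hm : ∀ k u z, AgreeUpTo (L k) u z → m k u = m k z)
    (hsuper : ∀ k z, m k z ≤ extSum (m (k + 1)) (L (k + 1) - L k) (L k) z)
    {E : Set (ℕ → I)} (hE : ∀ x, (∀ k, m k x ≠ 0) → x ∈ E) {c : ℕ → ℕ × (ℕ → I)}
    (hc : E ⊆ ⋃ i, cyl (c i).1 (c i).2) {K : ℕ → ℕ} (hK : ∀ i, (c i).1 ≤ L (K i)) (z : ℕ → I) :
    m 0 z ≤ ∑' i, extSum ((cyl (c i).1 (c i).2).indicator (m (K i))) (L (K i) - L 0) (L 0) z := by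
  set g : ℕ → (ℕ → I) → ℝ≥0∞ := fun i => (cyl (c i).1 (c i).2).indicator (m (K i))
  -- the part of the cover seen from a cylinder of generation `k`
  set R : ℕ → (ℕ → I) → ℝ≥0∞ := fun k z =>
    ∑' i, if k ≤ K i then extSum (g i) (L (K i) - L k) (L k) z else 0 with hRdef
  have hsplit : ∀ k z, R k z = (∑' i, if K i = k then g i z else 0)
      + extSum (R (k + 1)) (L (k + 1) - L k) (L k) z := by
    intro k z
    rw [hRdef, extSum_tsum, ← ENNReal.tsum_add]
    refine tsum_congr fun i => ?_
    rcases lt_trichotomy (K i) k with hlt | rfl | hgt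
    · rw [if_neg (by omega), if_neg (by omega), zero_add,
        extSum_eq_zero _ fun u _ => if_neg (by omega)]
    · rw [if_pos le_rfl, if_pos rfl, Nat.sub_self, extSum_eq_zero _ fun u _ => if_neg (by omega),
        add_zero]
      rfl
    · rw [if_pos hgt.le, if_neg hgt.ne', zero_add,
        extSum_trans _ (hL k.le_succ) (hL (Nat.succ_le_of_lt hgt))]
      exact extSum_congr _ fun u _ => (if_pos hgt).symm
  have hcaptured : ∀ i z, z ∈ cyl (c i).1 (c i).2 → m (K i) z ≤ R (K i) z := fun i z hz => by
    rw [hsplit]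
    refine le_add_right ((ENNReal.le_tsum i).trans_eq' ?_)
    rw [if_pos rfl]
    exact Set.indicator_of_mem hz _
  have hstep : ∀ k z, R k z < m k z → ∃ u, AgreeUpTo (L k) u z ∧ R (k + 1) u < m (k + 1) u := by
    intro k z hz
    by_contra! hnot
    refine hz.not_ge ((hsuper k z).trans ?_)
    rw [hsplit]
    exact le_add_left (extSum_mono _ hnot)
  by_contra! hlt
  obtain ⟨zs, rfl, hzs⟩ := exists_seq_of_forall_exists
    (R := fun k x y => AgreeUpTo (L k) y x) (show R 0 z < m 0 z by simpa [hRdef] using hlt)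
    hstep
  obtain ⟨x, hx⟩ := exists_forall_agreeUpTo hL hLub fun k => (hzs k).2
  obtain ⟨-, ⟨i, rfl⟩, hxi⟩ := hc (hE x fun k => (hm k _ _ (hx k)).symm ▸ (hzs k).1.ne_bot)
  exact (hcaptured i _ (((hx (K i)).mono (hK i)).symm.trans hxi)).not_gt (hzs (K i)).1

end MassDistribution

section Frostman

variable {I : Type*} [MeasurableSpace I] {μ : Measure (ℕ → I)}
  {d dt : ℕ → ℕ} {J Jt : ℕ → Set (Set (ℕ → I))} {αs βs γs δs : ℕ → ℝ}
  (B : PatternMassBounds μ J Jt αs βs γs δs) (T : IsPatternTree d dt J Jt)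
  {ρ : ℝ≥0∞} (h0 : ∀ S ∈ J 0, ρ ≤ μ S) (hρ : ρ ≠ 0) (hρ' : ρ ≠ ⊤) {a G : ℝ} (ha0 : 0 ≤ a)
  (hG : ∀ j, massBound βs δs j / δs (j + 1)
    * Real.exp (a * (∑ i ∈ Icc 1 j, αs i + ∑ i ∈ Icc 1 j, γs i)) ≤ G)
include B T h0 hρ hρ' ha0

theorem one_le_ofReal_exp_mul_rpow_measure {j : ℕ} {w : ℕ → I} (hw : cyl (d j) w ∈ J j) :
    1 ≤ ENNReal.ofReal (Real.exp (a * (∑ i ∈ Icc 1 j, αs i + ∑ i ∈ Icc 1 j, γs i)))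
      * (ρ ^ a)⁻¹ * μ (cyl (d j) w) ^ a := by
  set A := ∑ i ∈ Icc 1 j, αs i + ∑ i ∈ Icc 1 j, γs i
  have hlow : ENNReal.ofReal (Real.exp (-(a * A))) * ρ ^ a ≤ μ (cyl (d j) w) ^ a := by
    calc ENNReal.ofReal (Real.exp (-(a * A))) * ρ ^ a
        = (ENNReal.ofReal (Real.exp (-A)) * ρ) ^ a := by
          rw [ENNReal.mul_rpow_of_nonneg _ _ ha0,
            ENNReal.ofReal_rpow_of_nonneg (Real.exp_pos _).le ha0,
            ← Real.exp_mul, neg_mul, mul_comm A]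
      _ ≤ _ := ENNReal.rpow_le_rpow (B.ofReal_exp_mul_le_measure T h0 j hw) ha0
  have hρa : ρ ^ a ≠ 0 := (ENNReal.rpow_pos (pos_iff_ne_zero.2 hρ) hρ').ne'
  have hρa' : ρ ^ a ≠ ⊤ := ENNReal.rpow_ne_top_of_nonneg ha0 hρ'
  calc (1 : ℝ≥0∞) = ENNReal.ofReal (Real.exp (a * A)) * (ρ ^ a)⁻¹
        * (ENNReal.ofReal (Real.exp (-(a * A))) * ρ ^ a) := by
        rw [mul_mul_mul_comm, ← ENNReal.ofReal_mul (Real.exp_pos _).le, ← Real.exp_add,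
          add_neg_cancel, Real.exp_zero, ENNReal.ofReal_one, one_mul,
          ENNReal.inv_mul_cancel hρa hρa']
    _ ≤ _ := by gcongr

theorem inv_rpow_measure_le {j : ℕ} {w : ℕ → I} (hw : cyl (d j) w ∈ J j) [IsFiniteMeasure μ] :
    (μ (cyl (d j) w) ^ a)⁻¹
      ≤ ENNReal.ofReal (Real.exp (a * (∑ i ∈ Icc 1 j, αs i + ∑ i ∈ Icc 1 j, γs i)))
        * (ρ ^ a)⁻¹ := by
  have h1 := one_le_ofReal_exp_mul_rpow_measure B T h0 hρ hρ' ha0 hw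
  have hq : μ (cyl (d j) w) ^ a ≠ 0 := fun h => by simp [h] at h1
  rw [ENNReal.inv_le_iff_le_mul (fun _ => hq)
    (absurd · (ENNReal.rpow_ne_top_of_nonneg ha0 (measure_ne_top μ _))), mul_comm]
  exact h1

include hG

theorem le_ofReal_mul_rpow_of_le_massBound {j : ℕ} {w : ℕ → I} (hw : cyl (d j) w ∈ J j) {n : ℕ}
    {w' : ℕ → I} (hsub : cyl (d j) w ⊆ cyl n w') {x : ℝ≥0∞}
    (hx : x ≤ ENNReal.ofReal (massBound βs δs j)) :
    x ≤ ENNReal.ofReal G * (ρ ^ a)⁻¹ * μ (cyl n w') ^ a := by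
  have hM := massBound_nonneg βs (fun i => (B.delta_pos i).le) j
  have hMG : massBound βs δs j * Real.exp (a * (∑ i ∈ Icc 1 j, αs i + ∑ i ∈ Icc 1 j, γs i)) ≤ G :=
    (mul_le_mul_of_nonneg_right (le_div_self hM (B.delta_pos (j + 1)) (B.delta_le_one (j + 1)))
      (Real.exp_pos _).le).trans (hG j)
  calc x ≤ ENNReal.ofReal (massBound βs δs j) * 1 := by rw [mul_one]; exact hx
    _ ≤ ENNReal.ofReal (massBound βs δs j)
        * (ENNReal.ofReal (Real.exp (a * (∑ i ∈ Icc 1 j, αs i + ∑ i ∈ Icc 1 j, γs i)))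
          * (ρ ^ a)⁻¹ * μ (cyl (d j) w) ^ a) := by
        gcongr
        exact one_le_ofReal_exp_mul_rpow_measure B T h0 hρ hρ' ha0 hw
    _ ≤ ENNReal.ofReal G * (ρ ^ a)⁻¹ * μ (cyl n w') ^ a := by
        rw [← mul_assoc, ← mul_assoc, ← ENNReal.ofReal_mul hM]
        gcongr

variable [IsFiniteMeasure μ] [Countable I]

theorem extSum_mass_two_mul_add_one_le (ha1 : a ≤ 1) {j n : ℕ} (hn : d j ≤ n)
    (hn' : n ≤ dt (j + 1)) (z : ℕ → I) :
    extSum (mass μ d dt J Jt (2 * j + 1)) (dt (j + 1) - n) n z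
      ≤ ENNReal.ofReal G * (ρ ^ a)⁻¹ * μ (cyl n z) ^ a := by
  rw [extSum_mass_two_mul_add_one T hn hn']
  by_cases hm : mass μ d dt J Jt (2 * j) z = 0
  · simp [hm]
  have hN := mem_J_of_mass_ne_zero hm
  have hδ := B.delta_pos (j + 1)
  set p := μ (cyl n z)
  set q := μ (cyl (d j) z)
  set M := massBound βs δs j / δs (j + 1)
  calc _ ≤ ENNReal.ofReal (massBound βs δs j) / (ENNReal.ofReal (δs (j + 1)) * q) * p :=
        mul_le_mul' (ENNReal.div_le_div (B.mass_two_mul_le T j z)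
          (B.ofReal_mul_measure_le_capacity T hN))
          ((flow_le_measure (t := dt (j + 1)) (𝒥 := Jt (j + 1)) (b := d j) (s := n - d j)
            (by omega) z).trans_eq (by rw [Nat.add_sub_cancel' hn]))
    _ = ENNReal.ofReal M * (p / q) := by
        rw [ENNReal.ofReal_div_of_pos hδ, div_eq_mul_inv, div_eq_mul_inv, div_eq_mul_inv,
          ENNReal.mul_inv (Or.inl (by simpa using hδ)) (Or.inl ENNReal.ofReal_ne_top)]
        ring
    _ ≤ ENNReal.ofReal M * (p ^ a * (q ^ a)⁻¹) := by
        rw [← div_eq_mul_inv]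
        exact mul_le_mul' le_rfl (ENNReal.div_le_rpow_div_rpow
          (measure_mono (cyl_subset_cyl hn (.refl _ z))) ha0 ha1)
    _ ≤ ENNReal.ofReal M * (p ^ a * (ENNReal.ofReal
          (Real.exp (a * (∑ i ∈ Icc 1 j, αs i + ∑ i ∈ Icc 1 j, γs i))) * (ρ ^ a)⁻¹)) := by
        gcongr
        exact inv_rpow_measure_le B T h0 hρ hρ' ha0 hN
    _ = ENNReal.ofReal (M * Real.exp (a * (∑ i ∈ Icc 1 j, αs i + ∑ i ∈ Icc 1 j, γs i)))
          * (ρ ^ a)⁻¹ * p ^ a := by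
        rw [ENNReal.ofReal_mul (div_nonneg (massBound_nonneg βs (fun i => (B.delta_pos i).le) j)
          hδ.le)]
        ring
    _ ≤ _ := by gcongr; exact hG j

theorem extSum_mass_two_mul_add_two_le {j n : ℕ} (hn : dt (j + 1) ≤ n) (hn' : n ≤ d (j + 1))
    (z : ℕ → I) :
    extSum (mass μ d dt J Jt (2 * j + 2)) (d (j + 1) - n) n z
      ≤ ENNReal.ofReal G * (ρ ^ a)⁻¹ * μ (cyl n z) ^ a := by
  classical
  rw [extSum_mass_two_mul_add_two T hn]
  by_cases hm : mass μ d dt J Jt (2 * j + 1) z = 0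
  · simp [hm]
  set X := extSum (fun u => if cyl (d (j + 1)) u ∈ J (j + 1) then 1 else 0) (d (j + 1) - n) n z
  by_cases hX : X = 0
  · simp [hX]
  obtain ⟨u, hu, huJ⟩ := exists_ne_zero_of_extSum_ne_zero _ hX
  have huJ : cyl (d (j + 1)) u ∈ J (j + 1) := by by_contra h; simp [h] at huJ
  refine le_ofReal_mul_rpow_of_le_massBound B T h0 hρ hρ' ha0 hG huJ (cyl_subset_cyl hn' hu) ?_
  calc _ ≤ ENNReal.ofReal (massBound βs δs (j + 1)) * 1 :=
        mul_le_mul' (B.mass_two_mul_add_one_le T (B.mass_two_mul_le T j) z)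
          (T.extSum_indicator_J_le_one hn hn' (mem_Jt_of_mass_ne_zero T hm))
    _ = _ := mul_one _

/-- The Frostman estimate `ν C ≤ c μ(C)^a`, where `ν C` is the mass of the generation-`K`
cylinders inside `C = cyl n w`, `K` being the first generation at least as deep as `C`. -/
theorem extSum_indicator_mass_le (ha1 : a ≤ 1) {n K : ℕ} (hK : n ≤ level d dt K)
    (hK' : ∀ k < K, level d dt k < n) (w z : ℕ → I) :
    extSum ((cyl n w).indicator (mass μ d dt J Jt K)) (level d dt K - level d dt 0)
        (level d dt 0) z
      ≤ ENNReal.ofReal G * (ρ ^ a)⁻¹ * μ (cyl n w) ^ a := by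
  have hlev0 : level d dt 0 = d 0 := level_two_mul d dt 0
  cases K with
  | zero =>
    rw [Nat.sub_self, extSum]
    by_cases hz : z ∈ cyl n w
    swap
    · simp [hz]
    rw [Set.indicator_of_mem hz]
    by_cases hm : mass μ d dt J Jt 0 z = 0
    · simp [hm]
    exact le_ofReal_mul_rpow_of_le_massBound B T h0 hρ hρ' ha0 hG
      (mem_J_of_mass_ne_zero (j := 0) hm) (cyl_subset_cyl (hlev0 ▸ hK) hz)
      (B.mass_two_mul_le T 0 z)
  | succ k =>
    have hk := hK' k k.lt_succ_self
    obtain ⟨z', hz', hle⟩ := extSum_indicator_cyl_le (f := mass μ d dt J Jt (k + 1))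
      ((T.monotone_level k.zero_le).trans hk.le) hK z w
    refine hle.trans ?_
    rw [← hz']
    obtain ⟨j, rfl | rfl⟩ := Nat.even_or_odd' k
    · rw [level_two_mul] at hk
      rw [level_two_mul_add_one] at hK ⊢
      exact extSum_mass_two_mul_add_one_le B T h0 hρ hρ' ha0 hG ha1 hk.le hK z'
    · rw [level_two_mul_add_one] at hk
      rw [show 2 * j + 1 + 1 = 2 * (j + 1) by ring, level_two_mul] at hK ⊢
      exact extSum_mass_two_mul_add_two_le B T h0 hρ hρ' ha0 hG hk.le hK z'

theorem one_le_mul_tsum_rpow_of_cover (ha1 : a ≤ 1) {z₀ : ℕ → I} (hz₀ : cyl (d 0) z₀ ∈ J 0)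
    {c : ℕ → ℕ × (ℕ → I)} (hc : ⋂ j, ⋃₀ J j ⊆ ⋃ i, cyl (c i).1 (c i).2) :
    1 ≤ ENNReal.ofReal G * (ρ ^ a)⁻¹ * ∑' i, μ (cyl (c i).1 (c i).2) ^ a := by
  have hE : ∀ x, (∀ k, mass μ d dt J Jt k x ≠ 0) → x ∈ ⋂ j, ⋃₀ J j := fun x hx =>
    Set.mem_iInter.2 fun j => ⟨_, mem_J_of_mass_ne_zero (hx (2 * j)), self_mem_cyl _ _⟩
  have hK := fun i => T.exists_le_level (c i).1
  calc (1 : ℝ≥0∞) = mass μ d dt J Jt 0 z₀ := by rw [mass_zero, if_pos hz₀]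
    _ ≤ _ := mass_le_tsum_extSum_indicator (m := mass μ d dt J Jt) T.monotone_level
      T.exists_le_level
      (fun k u z h => mass_congr T h)
      (mass_le_extSum_mass T fun j z hz => B.capacity_ne_zero T h0 hρ hz) hE hc
      (fun i => Nat.find_spec (hK i)) z₀
    _ ≤ ∑' i, ENNReal.ofReal G * (ρ ^ a)⁻¹ * μ (cyl (c i).1 (c i).2) ^ a :=
      ENNReal.tsum_le_tsum fun i => extSum_indicator_mass_le B T h0 hρ hρ' ha0 hG ha1
        (Nat.find_spec (hK i)) (fun k hk => not_le.1 (Nat.find_min (hK i) hk)) _ _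
    _ = _ := ENNReal.tsum_mul_left

end Frostman

section Dimension

variable {I : Type*} [MeasurableSpace I] {μ : Measure (ℕ → I)} {E : Set (ℕ → I)}

theorem cylM_ne_zero_of_forall_cover {a : ℝ} {C : ℝ≥0∞} (hC : C ≠ ⊤)
    (h : ∀ c : ℕ → ℕ × (ℕ → I), E ⊆ ⋃ i, cyl (c i).1 (c i).2 →
      1 ≤ C * ∑' i, μ (cyl (c i).1 (c i).2) ^ a) :
    cylM μ a E ≠ 0 := by
  refine (lt_of_lt_of_le (ENNReal.inv_pos.2 hC) (le_iSup_of_le 0 (le_iInf₂ fun c hc => ?_))).ne'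
  have h1 := h c hc.2
  exact (ENNReal.inv_le_iff_le_mul (fun _ => by rintro rfl; simp at h1) (absurd · hC)).2 h1

theorem le_cylDim_of_forall_lt {L : ℝ} (h : ∀ a, 0 ≤ a → a < L → cylM μ a E ≠ 0) :
    ENNReal.ofReal L ≤ cylDim μ E := by
  refine le_sInf ?_
  rintro _ ⟨a, ⟨ha0, haM⟩, rfl⟩
  by_contra! hlt
  exact h a ha0 ((ENNReal.ofReal_lt_ofReal_iff_of_nonneg ha0).1 hlt) haM

end Dimension

theorem eventually_mul_lt_of_lt_liminf_div {N A : ℕ → ℝ} {a : ℝ}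
    (hA : ∀ᶠ j in atTop, 0 < A j) (ha0 : 0 ≤ a) (ha : a < liminf (fun j => N j / A j) atTop) :
    ∀ᶠ j in atTop, a * A j < N j := by
  rw [liminf_eq] at ha
  have hne : {x | ∀ᶠ j in atTop, x ≤ N j / A j}.Nonempty := by
    by_contra h
    rw [Set.not_nonempty_iff_eq_empty.1 h, Real.sSup_empty] at ha
    exact ha.not_ge ha0
  obtain ⟨x, hx, hax⟩ := exists_lt_of_lt_csSup hne ha
  filter_upwards [hx, hA] with j hj hAj
  exact (lt_div_iff₀ hAj).1 (hax.trans_le hj)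

theorem massBound_div_mul_exp {βs δs : ℕ → ℝ} (hδ : ∀ j, 0 < δs j) (j : ℕ) (x : ℝ) :
    massBound βs δs j / δs (j + 1) * Real.exp x
      = Real.exp (x - (∑ i ∈ Icc 1 j, βs i - Real.log (1 / ∏ i ∈ Icc 1 (j + 1), δs i))) := by
  have hP : 0 < ∏ i ∈ Icc 1 j, δs i := prod_pos fun i _ => hδ i
  rw [massBound, prod_Icc_succ_top (by omega), sub_sub_eq_add_sub, Real.exp_sub, Real.exp_add,
    Real.exp_log (by have := hδ (j + 1); positivity), Real.exp_neg]
  field_simp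

section LiminfBound

variable {αs βs γs δs : ℕ → ℝ}
  (hpos : ∀ j, 0 < βs j ∧ βs j ≤ αs j ∧ 0 ≤ γs j ∧ 0 < δs j ∧ δs j ≤ 1) {a : ℝ} (ha0 : 0 ≤ a)
  (ha : a < liminf (fun j : ℕ => (∑ i ∈ Icc 1 j, βs i - Real.log (1 / ∏ i ∈ Icc 1 (j + 1), δs i))
    / (∑ i ∈ Icc 1 j, αs i + ∑ i ∈ Icc 1 j, γs i)) atTop)
include hpos ha0 ha

theorem eventually_mul_lt_of_lt_liminf : ∀ᶠ j in atTop, 1 ≤ j ∧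
    a * (∑ i ∈ Icc 1 j, αs i + ∑ i ∈ Icc 1 j, γs i)
      < ∑ i ∈ Icc 1 j, βs i - Real.log (1 / ∏ i ∈ Icc 1 (j + 1), δs i) := by
  have hA : ∀ᶠ j in atTop, 0 < ∑ i ∈ Icc 1 j, αs i + ∑ i ∈ Icc 1 j, γs i :=
    eventually_atTop.2 ⟨1, fun j hj => add_pos_of_pos_of_nonneg
      (sum_pos (fun i _ => (hpos i).1.trans_le (hpos i).2.1) ⟨1, by simp [hj]⟩)
      (sum_nonneg fun i _ => (hpos i).2.2.1)⟩
  exact (eventually_ge_atTop 1).and (eventually_mul_lt_of_lt_liminf_div hA ha0 ha)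

theorem le_one_of_lt_liminf : a ≤ 1 := by
  obtain ⟨j, hj1, hj⟩ := (eventually_mul_lt_of_lt_liminf hpos ha0 ha).exists
  have hP : 0 < ∏ i ∈ Icc 1 (j + 1), δs i := prod_pos fun i _ => (hpos i).2.2.2.1
  have hα : 0 < ∑ i ∈ Icc 1 j, αs i :=
    sum_pos (fun i _ => (hpos i).1.trans_le (hpos i).2.1) ⟨1, by simp [hj1]⟩
  have hβ : ∑ i ∈ Icc 1 j, βs i ≤ ∑ i ∈ Icc 1 j, αs i := sum_le_sum fun i _ => (hpos i).2.1
  have hγ : 0 ≤ ∑ i ∈ Icc 1 j, γs i := sum_nonneg fun i _ => (hpos i).2.2.1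
  have hδ : 0 ≤ Real.log (1 / ∏ i ∈ Icc 1 (j + 1), δs i) := Real.log_nonneg <| by
    rw [le_div_iff₀ hP, one_mul]
    exact prod_le_one (fun i _ => (hpos i).2.2.2.1.le) fun i _ => (hpos i).2.2.2.2
  by_contra! h
  nlinarith

theorem exists_bound_of_lt_liminf : ∃ G, ∀ j, massBound βs δs j / δs (j + 1)
    * Real.exp (a * (∑ i ∈ Icc 1 j, αs i + ∑ i ∈ Icc 1 j, γs i)) ≤ G := by
  obtain ⟨G, hG⟩ := (isBoundedUnder_of_eventually_le (a := (1 : ℝ))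
    (u := fun j => massBound βs δs j / δs (j + 1)
      * Real.exp (a * (∑ i ∈ Icc 1 j, αs i + ∑ i ∈ Icc 1 j, γs i)))
    ((eventually_mul_lt_of_lt_liminf hpos ha0 ha).mono fun j hj => by
      rw [massBound_div_mul_exp (fun i => (hpos i).2.2.2.1), Real.exp_le_one_iff]
      linarith [hj.2])).bddAbove_range
  exact ⟨G, fun j => hG ⟨j, rfl⟩⟩

end LiminfBound

theorem stmt19_general {I : Type*} [Countable I] [MeasurableSpace I]
    (μ : Measure (ℕ → I)) [IsProbabilityMeasure μ]
    (φ : (ℕ → I) → ℝ) (Pc Kc cc : ℝ) (hKc : 1 ≤ Kc) (hcc : 1 ≤ cc)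
    (hGibbs : ∀ n : ℕ, 0 < n → ∀ z : ℕ → I,
      Real.exp (-(n : ℝ) * Pc + ∑ j ∈ Finset.range n, φ (lshift^[j] z)) /
          (cc * Kc) ≤ (μ (cyl (n - 1) z)).toReal ∧
      (μ (cyl (n - 1) z)).toReal ≤
        cc * Kc *
          Real.exp (-(n : ℝ) * Pc + ∑ j ∈ Finset.range n, φ (lshift^[j] z)))
    (dt d : ℕ → ℕ) (Jt J : ℕ → Set (Set (ℕ → I)))
    (hJ0 : ∃ S₀ : Set (ℕ → I), J 0 = {S₀} ∧ Jt 0 = {S₀})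
    (hcylJt : ∀ j, ∀ S ∈ Jt j, ∃ z, S = cyl (dt j) z)
    (hcylJ : ∀ j, ∀ S ∈ J j, ∃ z, S = cyl (d j) z)
    (hdepth : ∀ j : ℕ, d j < dt (j + 1) ∧ dt (j + 1) ≤ d (j + 1))
    (hnest1 : ∀ j, ∀ S ∈ J (j + 1), ∃ St ∈ Jt (j + 1), S ⊆ St)
    (hnest2 : ∀ j, ∀ St ∈ Jt (j + 1), ∃ Sp ∈ J j, St ⊆ Sp)
    (huniq : ∀ j, ∀ St ∈ Jt (j + 1), ∃! S, S ∈ J (j + 1) ∧ S ⊆ St)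
    (αs βs γs δs : ℕ → ℝ)
    (hpos : ∀ j, 0 < βs j ∧ βs j ≤ αs j ∧ 0 ≤ γs j ∧ 0 < δs j ∧ δs j ≤ 1)
    (hαβ : ∀ j, ∀ St ∈ Jt (j + 1), ∀ Sp ∈ J j, St ⊆ Sp →
      ENNReal.ofReal (Real.exp (-(αs (j + 1)))) * μ Sp ≤ μ St ∧
      μ St ≤ ENNReal.ofReal (Real.exp (-(βs (j + 1)))) * μ Sp)
    (hγ : ∀ j, ∀ S ∈ J (j + 1), ∀ St ∈ Jt (j + 1), S ⊆ St →
      ENNReal.ofReal (Real.exp (-(γs (j + 1)))) * μ St ≤ μ S)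
    (hδ : ∀ j, ∀ Sp ∈ J j,
      ENNReal.ofReal (δs (j + 1)) * μ Sp ≤ μ (⋃₀ {St | St ∈ Jt (j + 1) ∧ St ⊆ Sp})) :
    ENNReal.ofReal (Filter.liminf (fun j : ℕ =>
        ((∑ i ∈ Finset.Icc 1 j, βs i) -
          Real.log (1 / ∏ i ∈ Finset.Icc 1 (j + 1), δs i)) /
        ((∑ i ∈ Finset.Icc 1 j, αs i) + ∑ i ∈ Finset.Icc 1 j, γs i))
      Filter.atTop) ≤
    cylDim μ (⋂ j, ⋃₀ (J j)) := by
  obtain ⟨S₀, hJ0, -⟩ := hJ0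
  have T : IsPatternTree d dt J Jt :=
    ⟨fun j => (hdepth j).1, fun j => (hdepth j).2, hcylJ, hcylJt, hnest1, hnest2, huniq⟩
  have B : PatternMassBounds μ J Jt αs βs γs δs :=
    ⟨fun j => (hpos j).2.2.2.1, fun j => (hpos j).2.2.2.2, hαβ, hγ, hδ⟩
  obtain ⟨z₀, rfl⟩ := hcylJ 0 S₀ (by simp [hJ0])
  have h0 : ∀ S ∈ J 0, μ (cyl (d 0) z₀) ≤ μ S := by simp [hJ0]
  have hρ : μ (cyl (d 0) z₀) ≠ 0 := by
    intro h
    have := (hGibbs (d 0 + 1) (Nat.succ_pos _) z₀).1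
    rw [Nat.add_sub_cancel, h, ENNReal.toReal_zero] at this
    exact this.not_gt (div_pos (Real.exp_pos _) (by nlinarith))
  refine le_cylDim_of_forall_lt fun a ha0 ha => ?_
  obtain ⟨G, hG⟩ := exists_bound_of_lt_liminf hpos ha0 ha
  have hρa : μ (cyl (d 0) z₀) ^ a ≠ 0 :=
    (ENNReal.rpow_pos (pos_iff_ne_zero.2 hρ) (measure_ne_top μ _)).ne'
  exact cylM_ne_zero_of_forall_cover (ENNReal.mul_ne_top ENNReal.ofReal_ne_top
    (ENNReal.inv_ne_top.2 hρa)) fun c hc =>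
    one_le_mul_tsum_rpow_of_cover B T h0 hρ (measure_ne_top μ _) ha0 hG
      (le_one_of_lt_liminf hpos ha0 ha) (z₀ := z₀) (by simp [hJ0]) hc

/-- Hungerford-type lower bound for the `μ̂`-dimension of a pattern set built from
nested families of cylinders, for a σ-invariant Gibbs measure `μ̂`: under the mass
ratio bounds `e^{-α_j} ≤ μ̂(J̃_j)/μ̂(J_{j-1}) ≤ e^{-β_j}`, `e^{-γ_j} ≤ μ̂(J_j)/μ̂(J̃_j)`,
the abundance bounds `∑ μ̂(J̃_j) ≥ δ_j μ̂(J_{j-1})`, and the growth condition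
`liminf (∑α + ∑γ)/j^η > 0` for some `η > 1`, one has
`Dim_μ̂(Z) ≥ liminf [(β₁+…+β_j) − log(1/(δ₁⋯δ_{j+1}))]/[(α₁+…+α_j)+(γ₁+…+γ_j)]`. -/
theorem stmt19 {I : Type*} [Countable I] [MeasurableSpace I]
    (μ : Measure (ℕ → I)) [IsProbabilityMeasure μ]
    (hinv : MeasurePreserving (lshift (I := I)) μ μ)
    (φ : (ℕ → I) → ℝ) (Pc Kc cc : ℝ) (hKc : 1 ≤ Kc) (hcc : 1 ≤ cc)
    (hGibbs : ∀ n : ℕ, 0 < n → ∀ z : ℕ → I,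
      Real.exp (-(n : ℝ) * Pc + ∑ j ∈ Finset.range n, φ (lshift^[j] z)) /
          (cc * Kc) ≤ (μ (cyl (n - 1) z)).toReal ∧
      (μ (cyl (n - 1) z)).toReal ≤
        cc * Kc *
          Real.exp (-(n : ℝ) * Pc + ∑ j ∈ Finset.range n, φ (lshift^[j] z)))
    (dt d : ℕ → ℕ) (Jt J : ℕ → Set (Set (ℕ → I)))
    (hJ0 : ∃ S₀ : Set (ℕ → I), J 0 = {S₀} ∧ Jt 0 = {S₀})
    (hcylJt : ∀ j, ∀ S ∈ Jt j, ∃ z, S = cyl (dt j) z)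
    (hcylJ : ∀ j, ∀ S ∈ J j, ∃ z, S = cyl (d j) z)
    (hdepth : ∀ j : ℕ, d j < dt (j + 1) ∧ dt (j + 1) ≤ d (j + 1))
    (hnest1 : ∀ j, ∀ S ∈ J (j + 1), ∃ St ∈ Jt (j + 1), S ⊆ St)
    (hnest2 : ∀ j, ∀ St ∈ Jt (j + 1), ∃ Sp ∈ J j, St ⊆ Sp)
    (huniq : ∀ j, ∀ St ∈ Jt (j + 1), ∃! S, S ∈ J (j + 1) ∧ S ⊆ St)
    (αs βs γs δs : ℕ → ℝ)
    (hpos : ∀ j, 0 < βs j ∧ βs j ≤ αs j ∧ 0 ≤ γs j ∧ 0 < δs j ∧ δs j ≤ 1)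
    (hαβ : ∀ j, ∀ St ∈ Jt (j + 1), ∀ Sp ∈ J j, St ⊆ Sp →
      ENNReal.ofReal (Real.exp (-(αs (j + 1)))) * μ Sp ≤ μ St ∧
      μ St ≤ ENNReal.ofReal (Real.exp (-(βs (j + 1)))) * μ Sp)
    (hγ : ∀ j, ∀ S ∈ J (j + 1), ∀ St ∈ Jt (j + 1), S ⊆ St →
      ENNReal.ofReal (Real.exp (-(γs (j + 1)))) * μ St ≤ μ S)
    (hδ : ∀ j, ∀ Sp ∈ J j,
      ENNReal.ofReal (δs (j + 1)) * μ Sp ≤ μ (⋃₀ {St | St ∈ Jt (j + 1) ∧ St ⊆ Sp}))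
    (hgrowth : ∃ η : ℝ, 1 < η ∧
      0 < Filter.liminf (fun j : ℕ =>
        (∑ i ∈ Finset.Icc 1 j, (αs i + γs i)) / (j : ℝ) ^ η) Filter.atTop) :
    ENNReal.ofReal (Filter.liminf (fun j : ℕ =>
        ((∑ i ∈ Finset.Icc 1 j, βs i) -
          Real.log (1 / ∏ i ∈ Finset.Icc 1 (j + 1), δs i)) /
        ((∑ i ∈ Finset.Icc 1 j, αs i) + ∑ i ∈ Finset.Icc 1 j, γs i))
      Filter.atTop) ≤
    cylDim μ (⋂ j, ⋃₀ (J j)) :=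
  stmt19_general μ φ Pc Kc cc hKc hcc hGibbs dt d Jt J hJ0 hcylJt hcylJ hdepth hnest1 hnest2 huniq
    αs βs γs δs hpos hαβ hγ hδ
end
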